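/- arXiv:1009.4918 — 3 statements merged into one kernel-verified Lean document; each statement's English description precedes it below -/
import Mathlib

section
/- Let W be the affine Coxeter group generated by the affine reflections associated to a crystallographic root system Φ spanning ℝ^n. If w ∈ W has the form w = t_λ ∘ w0 where λ ∈ L has integral dimension k and w0 ∈ W0, then k ≤ ℓ_R(w) ≤ k + n. -/
open RealInnerProductSpace

noncomputable section

/-- A crystallographic (reduced) root system spanning `ℝⁿ`. -/
structure IsRootSystem (n : ℕ) (Φ : Set (EuclideanSpace ℝ (Fin n))) : Prop where
  finite : Φ.Finite
  nonzero : ∀ α ∈ Φ, α ≠ 0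
  spans : Submodule.span ℝ Φ = ⊤
  reflect_mem : ∀ α ∈ Φ, ∀ β ∈ Φ, β - (2 * ⟪β, α⟫ / ⟪α, α⟫) • α ∈ Φ
  crystallographic : ∀ α ∈ Φ, ∀ β ∈ Φ, ∃ z : ℤ, (z : ℝ) = 2 * ⟪β, α⟫ / ⟪α, α⟫
  reduced : ∀ α ∈ Φ, ∀ c : ℝ, c • α ∈ Φ → c = 1 ∨ c = -1

/-- The coroot `α∨ = (2/⟨α,α⟩) α`. -/
def coroot {n : ℕ} (α : EuclideanSpace ℝ (Fin n)) : EuclideanSpace ℝ (Fin n) :=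
  (2 / ⟪α, α⟫) • α

lemma affRefl_involutive {n : ℕ} (α : EuclideanSpace ℝ (Fin n)) (i : ℤ) :
    Function.Involutive
      (fun x : EuclideanSpace ℝ (Fin n) => x - (⟪x, α⟫ - (i : ℝ)) • coroot α) := by
  intro x
  by_cases h : ⟪α, α⟫ = 0
  · simp only [coroot, h, div_zero, zero_smul, smul_zero, sub_zero]
  · have hv : ⟪coroot α, α⟫ = 2 := by
      rw [coroot, real_inner_smul_left, div_mul_cancel₀ _ h]
    dsimp only
    rw [inner_sub_left, real_inner_smul_left, hv]
    module

/-- The affine reflection `r_{α,i}` across the hyperplane `{x : ⟨x,α⟩ = i}`,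
as a permutation of `ℝⁿ`. -/
def affRefl {n : ℕ} (α : EuclideanSpace ℝ (Fin n)) (i : ℤ) :
    Equiv.Perm (EuclideanSpace ℝ (Fin n)) :=
  (affRefl_involutive α i).toPerm _

/-- The set `R` of all affine reflections `r_{α,i}`, `α ∈ Φ`, `i ∈ ℤ`. -/
def affR {n : ℕ} (Φ : Set (EuclideanSpace ℝ (Fin n))) :
    Set (Equiv.Perm (EuclideanSpace ℝ (Fin n))) :=
  {w | ∃ α ∈ Φ, ∃ i : ℤ, w = affRefl α i}

/-- The affine Coxeter group `W` generated by all affine reflections. -/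
def affW {n : ℕ} (Φ : Set (EuclideanSpace ℝ (Fin n))) :
    Subgroup (Equiv.Perm (EuclideanSpace ℝ (Fin n))) :=
  Subgroup.closure (affR Φ)

/-- The set `R₀ = {r_{α,0} : α ∈ Φ}` of reflections through the origin. -/
def linR {n : ℕ} (Φ : Set (EuclideanSpace ℝ (Fin n))) :
    Set (Equiv.Perm (EuclideanSpace ℝ (Fin n))) :=
  {w | ∃ α ∈ Φ, w = affRefl α 0}

/-- The finite reflection group `W₀` generated by the reflections fixing the origin. -/
def linW {n : ℕ} (Φ : Set (EuclideanSpace ℝ (Fin n))) :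
    Subgroup (Equiv.Perm (EuclideanSpace ℝ (Fin n))) :=
  Subgroup.closure (linR Φ)

/-- The translation `t_λ : x ↦ x + λ` as a permutation of `ℝⁿ`. -/
def transPerm {n : ℕ} (lam : EuclideanSpace ℝ (Fin n)) :
    Equiv.Perm (EuclideanSpace ℝ (Fin n)) :=
  Equiv.addRight lam

/-- The coroot lattice `L = ℤΦ∨`: all integral linear combinations of coroots. -/
def corootLattice {n : ℕ} (Φ : Set (EuclideanSpace ℝ (Fin n))) :
    AddSubgroup (EuclideanSpace ℝ (Fin n)) :=
  AddSubgroup.closure (coroot '' Φ)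

/-- The word length of `w` with respect to a set `R`: the minimal `m` such that `w`
is a product of `m` elements of `R` (`⊤` if there is no such product). -/
def wordLength {G : Type*} [Monoid G] (R : Set G) (w : G) : ℕ∞ :=
  sInf {m : ℕ∞ | ∃ l : List G, (∀ r ∈ l, r ∈ R) ∧ l.prod = w ∧ (l.length : ℕ∞) = m}

/-- `λ` has integral dimension `k` iff `k` is least such that `λ` is an integral
combination of `k` coroots. -/
def intDim {n : ℕ} (Φ : Set (EuclideanSpace ℝ (Fin n)))
    (lam : EuclideanSpace ℝ (Fin n)) : ℕ :=
  sInf {k : ℕ | ∃ (c : Fin k → ℤ) (α : Fin k → EuclideanSpace ℝ (Fin n)),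
    (∀ i, α i ∈ Φ) ∧ lam = ∑ i, c i • coroot (α i)}

/-- `λ` has real dimension `k` iff `k` is the least dimension of a subspace of `ℝⁿ`
spanned by a set of coroots and containing `λ`. -/
def realDim {n : ℕ} (Φ : Set (EuclideanSpace ℝ (Fin n)))
    (lam : EuclideanSpace ℝ (Fin n)) : ℕ :=
  sInf {k : ℕ | ∃ S : Set (EuclideanSpace ℝ (Fin n)), S ⊆ coroot '' Φ ∧
    lam ∈ Submodule.span ℝ S ∧ Module.finrank ℝ ↥(Submodule.span ℝ S) = k}

namespace CarterAux

variable {n : ℕ}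

local notation "V" => EuclideanSpace ℝ (Fin n)

@[simp] lemma affRefl_apply (α : V) (i : ℤ) (x : V) :
    affRefl α i x = x - (⟪x, α⟫ - (i : ℝ)) • coroot α := rfl

lemma perm_apply_inv_self (w : Equiv.Perm V) (x : V) : w (w⁻¹ x) = x := by simp

lemma affRefl_sq (α : V) (i : ℤ) : affRefl α i * affRefl α i = 1 :=
  Equiv.ext fun x => affRefl_involutive α i x

lemma affRefl_inv (α : V) (i : ℤ) : (affRefl α i)⁻¹ = affRefl α i := by
  rw [eq_comm, eq_inv_iff_mul_eq_one]; exact affRefl_sq α i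

lemma coroot_inner_self {α : V} (h : ⟪α, α⟫ ≠ 0) : ⟪coroot α, α⟫ = 2 := by
  rw [coroot, real_inner_smul_left, div_mul_cancel₀ _ h]

lemma refl0_apply (α x : V) :
    affRefl α 0 x = x - (2 * ⟪x, α⟫ / ⟪α, α⟫) • α := by
  simp only [affRefl_apply, Int.cast_zero, sub_zero, coroot, smul_smul]
  rw [show ⟪x,α⟫ * (2/⟪α,α⟫) = 2*⟪x,α⟫/⟪α,α⟫ from by ring]

lemma refl0_add (α x y : V) : affRefl α 0 (x + y) = affRefl α 0 x + affRefl α 0 y := by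
  simp only [refl0_apply, inner_add_left]
  rw [show 2 * (⟪x,α⟫ + ⟪y,α⟫) / ⟪α,α⟫ = 2*⟪x,α⟫/⟪α,α⟫ + 2*⟪y,α⟫/⟪α,α⟫ by ring]
  module

lemma refl0_smul (α : V) (c : ℝ) (x : V) : affRefl α 0 (c • x) = c • affRefl α 0 x := by
  simp only [refl0_apply, real_inner_smul_left]
  rw [show 2 * (c * ⟪x,α⟫) / ⟪α,α⟫ = c * (2*⟪x,α⟫/⟪α,α⟫) by ring]
  module

lemma refl0_inner (α x y : V) :
    ⟪affRefl α 0 x, affRefl α 0 y⟫ = ⟪x, y⟫ := by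
  by_cases h : ⟪α, α⟫ = 0
  · have h0 : α = 0 := inner_self_eq_zero.mp h
    simp [refl0_apply, h0]
  · have hcs : 2 / ⟪α,α⟫ * ⟪α,α⟫ = 2 := div_mul_cancel₀ _ h
    have h1 : ∀ z : V, ⟪z, coroot α⟫ = 2/⟪α,α⟫ * ⟪z,α⟫ := fun z => by
      rw [coroot, real_inner_smul_right]
    have h2 : ∀ z : V, ⟪coroot α, z⟫ = 2/⟪α,α⟫ * ⟪z,α⟫ := fun z => by
      rw [coroot, real_inner_smul_left, real_inner_comm α z]
    have h3 : ⟪coroot α, coroot α⟫ = 2/⟪α,α⟫ * (2/⟪α,α⟫ * ⟪α,α⟫) := by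
      rw [coroot, real_inner_smul_left, real_inner_smul_right]
    simp only [affRefl_apply, Int.cast_zero, sub_zero, inner_sub_left, inner_sub_right,
      real_inner_smul_left, real_inner_smul_right, h1, h2, h3]
    linear_combination (⟪x,α⟫ * ⟪y,α⟫ * (2/⟪α,α⟫)) * hcs

lemma refl0_neg_root (α : V) : affRefl (-α) 0 = affRefl α 0 := by
  apply Equiv.ext
  intro x
  rw [refl0_apply, refl0_apply, inner_neg_right, inner_neg_neg]
  rw [show 2 * -⟪x,α⟫ / ⟪α,α⟫ = -(2 * ⟪x,α⟫ / ⟪α,α⟫) by ring, neg_smul, smul_neg, neg_neg]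


section RootSys

variable {Φ : Set (EuclideanSpace ℝ (Fin n))} {α β : EuclideanSpace ℝ (Fin n)}

lemma inner_self_ne (hΦ : IsRootSystem n Φ) (hα : α ∈ Φ) : ⟪α, α⟫ ≠ 0 :=
  fun h => hΦ.nonzero α hα (inner_self_eq_zero.mp h)

lemma inner_self_pos' (hΦ : IsRootSystem n Φ) (hα : α ∈ Φ) : 0 < ⟪α, α⟫ := by
  rw [real_inner_self_eq_norm_mul_norm]
  have h0 : ‖α‖ ≠ 0 := norm_ne_zero_iff.mpr (hΦ.nonzero α hα)
  positivity

lemma refl_root_mem (hΦ : IsRootSystem n Φ) (hα : α ∈ Φ) (hβ : β ∈ Φ) :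
    affRefl α 0 β ∈ Φ := by
  rw [refl0_apply]; exact hΦ.reflect_mem α hα β hβ

lemma neg_mem (hΦ : IsRootSystem n Φ) (hα : α ∈ Φ) : -α ∈ Φ := by
  have h := refl_root_mem hΦ hα hα
  rw [refl0_apply, mul_div_assoc, div_self (inner_self_ne hΦ hα), mul_one] at h
  rw [show α - (2:ℝ) • α = -α by module] at h
  exact h

lemma coroot_inner_int (hΦ : IsRootSystem n Φ) (hβ : β ∈ Φ) (hα : α ∈ Φ) :
    ∃ z : ℤ, (z : ℝ) = ⟪coroot β, α⟫ := by
  obtain ⟨z, hz⟩ := hΦ.crystallographic β hβ α hα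
  refine ⟨z, ?_⟩
  rw [coroot, real_inner_smul_left, real_inner_comm α β, hz]
  ring

/-- If two distinct roots have positive inner product, their difference is a root. -/
lemma pair_lemma (hΦ : IsRootSystem n Φ) (hα : α ∈ Φ) (hβ : β ∈ Φ) (hne : α ≠ β)
    (hpos : 0 < ⟪α, β⟫) : α - β ∈ Φ := by
  have hsα := inner_self_pos' hΦ hα
  have hsβ := inner_self_pos' hΦ hβ
  have hip : ⟪β, α⟫ = ⟪α, β⟫ := real_inner_comm α β
  obtain ⟨a, ha⟩ := hΦ.crystallographic β hβ α hα
  obtain ⟨b, hb⟩ := hΦ.crystallographic α hα β hβ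
  rw [hip] at hb
  -- ha : (a:ℝ) = 2⟪α,β⟫/⟪β,β⟫,  hb : (b:ℝ) = 2⟪α,β⟫/⟪α,α⟫
  have hapos : 0 < a := by
    have : (0:ℝ) < (a:ℝ) := by rw [ha]; positivity
    exact_mod_cast this
  have hbpos : 0 < b := by
    have : (0:ℝ) < (b:ℝ) := by rw [hb]; positivity
    exact_mod_cast this
  by_cases hb1 : b = 1
  · have h := hΦ.reflect_mem α hα β hβ
    rw [hip, ← hb, hb1] at h
    norm_num at h
    have := neg_mem hΦ h
    rw [neg_sub] at this
    exact this
  by_cases ha1 : a = 1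
  · have h := hΦ.reflect_mem β hβ α hα
    rw [← ha, ha1] at h
    norm_num at h
    exact h
  exfalso
  have hcs : ⟪α, β⟫ * ⟪α, β⟫ ≤ ⟪α, α⟫ * ⟪β, β⟫ := real_inner_mul_inner_self_le α β
  have hab4 : (a : ℝ) * b ≤ 4 := by
    rw [ha, hb, div_mul_div_comm, div_le_iff₀ (by positivity)]
    nlinarith [hcs]
  have ha2 : 2 ≤ a := by omega
  have hb2 : 2 ≤ b := by omega
  have hab4' : (4:ℝ) ≤ (a:ℝ) * b := by
    have : (4:ℤ) ≤ a * b := by nlinarith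
    exact_mod_cast this
  have h4 : (a:ℝ) * b = 4 := le_antisymm hab4 hab4'
  rw [ha, hb, div_mul_div_comm, div_eq_iff (by positivity)] at h4
  have heq : ⟪α, β⟫ * ⟪α, β⟫ = ⟪α, α⟫ * ⟪β, β⟫ := by nlinarith [h4]
  set c : ℝ := ⟪α, β⟫ / ⟪α, α⟫ with hc
  have hcc : c * ⟪α, α⟫ = ⟪α, β⟫ := div_mul_cancel₀ _ (ne_of_gt hsα)
  have h5 : c * ⟪α, β⟫ = ⟪β, β⟫ := by
    have h6 : (c * ⟪α, β⟫) * ⟪α, α⟫ = ⟪β, β⟫ * ⟪α, α⟫ := by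
      calc (c * ⟪α,β⟫) * ⟪α,α⟫ = ⟪α,β⟫ * (c * ⟪α,α⟫) := by ring
      _ = ⟪α,β⟫ * ⟪α,β⟫ := by rw [hcc]
      _ = ⟪α,α⟫ * ⟪β,β⟫ := heq
      _ = ⟪β,β⟫ * ⟪α,α⟫ := by ring
    exact mul_right_cancel₀ (ne_of_gt hsα) h6
  have hv : ⟪β - c • α, β - c • α⟫ = (0:ℝ) := by
    simp only [inner_sub_left, inner_sub_right, real_inner_smul_left, real_inner_smul_right, hip]
    linear_combination c * hcc - h5
  have hβα : β = c • α := sub_eq_zero.mp (inner_self_eq_zero.mp hv)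
  rcases hΦ.reduced α hα c (hβα ▸ hβ) with h1 | h1
  · exact hne (by rw [hβα, h1, one_smul])
  · rw [hβα, h1, neg_one_smul, inner_neg_right] at hpos
    nlinarith [hsα]

/-- Orthogonal linear permutations preserving the root system. -/
structure OP (Φ : Set (EuclideanSpace ℝ (Fin n))) (w : Equiv.Perm (EuclideanSpace ℝ (Fin n))) :
    Prop where
  map_add : ∀ x y, w (x + y) = w x + w y
  map_smul : ∀ (c : ℝ) (x), w (c • x) = c • w x
  inner_map : ∀ x y, ⟪w x, w y⟫ = ⟪x, y⟫
  maps : ∀ a ∈ Φ, w a ∈ Φ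
  maps_inv : ∀ a ∈ Φ, w⁻¹ a ∈ Φ

namespace OP

variable {Φ : Set (EuclideanSpace ℝ (Fin n))} {w u : Equiv.Perm (EuclideanSpace ℝ (Fin n))}

lemma map_zero (h : OP Φ w) : w 0 = 0 := by
  have := h.map_smul 0 0; simpa using this

lemma map_neg (h : OP Φ w) (x : EuclideanSpace ℝ (Fin n)) : w (-x) = -(w x) := by
  have := h.map_smul (-1) x; simpa using this

lemma map_sub (h : OP Φ w) (x y : EuclideanSpace ℝ (Fin n)) : w (x - y) = w x - w y := by
  rw [sub_eq_add_neg, h.map_add, h.map_neg, sub_eq_add_neg]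

lemma one : OP Φ (1 : Equiv.Perm (EuclideanSpace ℝ (Fin n))) := by
  constructor <;> simp [Equiv.Perm.one_apply]

lemma mul (hu : OP Φ u) (hw : OP Φ w) : OP Φ (u * w) := by
  constructor
  · intro x y; simp [Equiv.Perm.mul_apply, hw.map_add, hu.map_add]
  · intro c x; simp [Equiv.Perm.mul_apply, hw.map_smul, hu.map_smul]
  · intro x y; simp [Equiv.Perm.mul_apply, hu.inner_map, hw.inner_map]
  · intro a ha; exact hu.maps _ (hw.maps a ha)
  · intro a ha; rw [mul_inv_rev]; exact hw.maps_inv _ (hu.maps_inv a ha)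

lemma inv (h : OP Φ w) : OP Φ w⁻¹ := by
  constructor
  · intro x y
    apply w.injective
    rw [h.map_add, perm_apply_inv_self, perm_apply_inv_self,
      perm_apply_inv_self]
  · intro c x
    apply w.injective
    rw [h.map_smul, perm_apply_inv_self, perm_apply_inv_self]
  · intro x y
    rw [← h.inner_map (w⁻¹ x) (w⁻¹ y), perm_apply_inv_self, perm_apply_inv_self]
  · exact h.maps_inv
  · intro a ha; rw [inv_inv]; exact h.maps a ha

end OP

lemma OP_refl0 (hΦ : IsRootSystem n Φ) (hα : α ∈ Φ) : OP Φ (affRefl α 0) := by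
  refine ⟨refl0_add α, refl0_smul α, refl0_inner α, fun a ha => refl_root_mem hΦ hα ha, ?_⟩
  intro a ha
  rw [affRefl_inv]
  exact refl_root_mem hΦ hα ha

lemma OP_linW (hΦ : IsRootSystem n Φ) {w : Equiv.Perm (EuclideanSpace ℝ (Fin n))}
    (hw : w ∈ linW Φ) : OP Φ w := by
  induction hw using Subgroup.closure_induction with
  | mem r hr => obtain ⟨a, ha, rfl⟩ := hr; exact OP_refl0 hΦ ha
  | one => exact OP.one
  | mul x y hx hy ihx ihy => exact ihx.mul ihy
  | inv x hx ihx => exact ihx.inv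

lemma prod_reverse_inv {G : Type*} [Group G] :
    ∀ (l : List G), (∀ r ∈ l, r⁻¹ = r) → l.reverse.prod = l.prod⁻¹
  | [], _ => by simp
  | a :: t, h => by
      rw [List.reverse_cons, List.prod_append, List.prod_cons,
        prod_reverse_inv t (fun r hr => h r (List.mem_cons_of_mem a hr))]
      simp [mul_inv_rev, h a List.mem_cons_self]

lemma linW_word {w : Equiv.Perm (EuclideanSpace ℝ (Fin n))} (hw : w ∈ linW Φ) :
    ∃ l : List (Equiv.Perm (EuclideanSpace ℝ (Fin n))),
      (∀ r ∈ l, r ∈ linR Φ) ∧ l.prod = w := by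
  induction hw using Subgroup.closure_induction with
  | mem r hr => exact ⟨[r], by simpa using hr, by simp⟩
  | one => exact ⟨[], by simp, by simp⟩
  | mul x y hx hy ihx ihy =>
      obtain ⟨l1, h1, e1⟩ := ihx
      obtain ⟨l2, h2, e2⟩ := ihy
      exact ⟨l1 ++ l2, by
        intro r hr
        rcases List.mem_append.mp hr with h | h
        exacts [h1 r h, h2 r h], by rw [List.prod_append, e1, e2]⟩
  | inv x hx ihx =>
      obtain ⟨l, hl, el⟩ := ihx
      refine ⟨l.reverse, fun r hr => hl r (List.mem_reverse.mp hr), ?_⟩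
      rw [prod_reverse_inv l fun r hr => ?_, el]
      obtain ⟨b, hb, rfl⟩ := hl r hr
      exact affRefl_inv b 0

/-- conjugation of a reflection by an orthogonal map. -/
lemma OP.conj {w : Equiv.Perm (EuclideanSpace ℝ (Fin n))} (hw : OP Φ w)
    (γ : EuclideanSpace ℝ (Fin n)) :
    w * affRefl γ 0 * w⁻¹ = affRefl (w γ) 0 := by
  apply Equiv.ext
  intro x
  have h1 : ⟪w⁻¹ x, γ⟫ = ⟪x, w γ⟫ := by
    rw [← hw.inner_map (w⁻¹ x) γ, perm_apply_inv_self]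
  simp only [Equiv.Perm.mul_apply, refl0_apply, hw.map_sub, hw.map_smul,
    perm_apply_inv_self, h1, hw.inner_map γ γ]

section Simple

attribute [local instance] Classical.propDecidable

/-- positive roots w.r.t. a regular point `p`. -/
def Pos (Φ : Set (EuclideanSpace ℝ (Fin n))) (p : EuclideanSpace ℝ (Fin n)) :
    Set (EuclideanSpace ℝ (Fin n)) := {α | α ∈ Φ ∧ 0 < ⟪α, p⟫}

/-- simple (indecomposable) positive roots. -/
def Simp (Φ : Set (EuclideanSpace ℝ (Fin n))) (p : EuclideanSpace ℝ (Fin n)) :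
    Set (EuclideanSpace ℝ (Fin n)) :=
  {α | α ∈ Pos Φ p ∧ ¬∃ β ∈ Pos Φ p, ∃ γ ∈ Pos Φ p, α = β + γ}

variable {p : EuclideanSpace ℝ (Fin n)}

/-- the finset of positive roots. -/
noncomputable def PosF (hΦ : IsRootSystem n Φ) (p : EuclideanSpace ℝ (Fin n)) :
    Finset (EuclideanSpace ℝ (Fin n)) :=
  (show (Pos Φ p).Finite from hΦ.finite.subset fun _ ha => ha.1).toFinset

lemma mem_PosF {hΦ : IsRootSystem n Φ} {a : EuclideanSpace ℝ (Fin n)} :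
    a ∈ PosF hΦ p ↔ a ∈ Pos Φ p := Set.Finite.mem_toFinset _

/-- the finset of simple roots. -/
noncomputable def SimpF (hΦ : IsRootSystem n Φ) (p : EuclideanSpace ℝ (Fin n)) :
    Finset (EuclideanSpace ℝ (Fin n)) :=
  (show (Simp Φ p).Finite from hΦ.finite.subset fun _ ha => ha.1.1).toFinset

lemma mem_SimpF {hΦ : IsRootSystem n Φ} {a : EuclideanSpace ℝ (Fin n)} :
    a ∈ SimpF hΦ p ↔ a ∈ Simp Φ p := Set.Finite.mem_toFinset _

/-- every root is positive or has positive negative. -/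
lemma pos_or_neg (hΦ : IsRootSystem n Φ) (hp : ∀ α ∈ Φ, ⟪α, p⟫ ≠ 0) (hα : α ∈ Φ) :
    α ∈ Pos Φ p ∨ -α ∈ Pos Φ p := by
  rcases lt_or_gt_of_ne (hp α hα) with h | h
  · right
    exact ⟨neg_mem hΦ hα, by rw [inner_neg_left]; linarith⟩
  · left; exact ⟨hα, h⟩

lemma neg_not_pos (hα : α ∈ Pos Φ p) : ¬(-α ∈ Pos Φ p) := by
  rintro ⟨-, h⟩
  rw [inner_neg_left] at h
  have := hα.2
  linarith

/-- measure for induction on positive roots: number of positive roots with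
smaller pairing with `p`. -/
noncomputable def Mea (hΦ : IsRootSystem n Φ) (p β : EuclideanSpace ℝ (Fin n)) : ℕ :=
  ((PosF hΦ p).filter (fun γ => ⟪γ, p⟫ < ⟪β, p⟫)).card

lemma mea_lt (hΦ : IsRootSystem n Φ) {β γ : EuclideanSpace ℝ (Fin n)}
    (hγ : γ ∈ Pos Φ p) (h : ⟪γ, p⟫ < ⟪β, p⟫) : Mea hΦ p γ < Mea hΦ p β := by
  apply Finset.card_lt_card
  constructor
  · intro x hx
    rw [Finset.mem_filter] at hx ⊢
    exact ⟨hx.1, lt_trans hx.2 h⟩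
  · intro hsub
    have hγmem : γ ∈ (PosF hΦ p).filter (fun γ' => ⟪γ', p⟫ < ⟪β, p⟫) :=
      Finset.mem_filter.mpr ⟨mem_PosF.mpr hγ, h⟩
    have := hsub hγmem
    rw [Finset.mem_filter] at this
    exact lt_irrefl _ this.2

/-- every positive root is a nonnegative combination of simple roots. -/
lemma pos_combo (hΦ : IsRootSystem n Φ) {β : EuclideanSpace ℝ (Fin n)}
    (hβ : β ∈ Pos Φ p) :
    ∃ c : EuclideanSpace ℝ (Fin n) → ℝ, (∀ v, 0 ≤ c v) ∧
      β = ∑ v ∈ SimpF hΦ p, c v • v := by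
  suffices H : ∀ N : ℕ, ∀ β ∈ Pos Φ p, Mea hΦ p β < N →
      ∃ c : EuclideanSpace ℝ (Fin n) → ℝ, (∀ v, 0 ≤ c v) ∧
        β = ∑ v ∈ SimpF hΦ p, c v • v by
    exact H (Mea hΦ p β + 1) β hβ (Nat.lt_succ_self _)
  intro N
  induction N with
  | zero => intro β _ h; omega
  | succ N ih =>
      intro β hβ hM
      by_cases hs : β ∈ Simp Φ p
      · have hsm : β ∈ SimpF hΦ p := mem_SimpF.mpr hs
        refine ⟨fun v => if v = β then 1 else 0, fun v => by positivity, ?_⟩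
        symm
        calc ∑ v ∈ SimpF hΦ p, (fun v => if v = β then (1:ℝ) else 0) v • v
            = ∑ v ∈ SimpF hΦ p, (if v = β then β else 0) := by
              refine Finset.sum_congr rfl fun v _ => ?_
              dsimp only
              split
              · next h => rw [h, one_smul]
              · rw [zero_smul]
          _ = β := by rw [Finset.sum_ite_eq' (SimpF hΦ p) β (fun _ => β), if_pos hsm]
      · have hdec : ∃ γ ∈ Pos Φ p, ∃ δ ∈ Pos Φ p, β = γ + δ := by
          by_contra hno
          exact hs ⟨hβ, hno⟩
        obtain ⟨γ, hγ, δ, hδ, rfl⟩ := hdec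
        have hγp : ⟪γ, p⟫ < ⟪γ + δ, p⟫ := by
          rw [inner_add_left]; have := hδ.2; linarith
        have hδp : ⟪δ, p⟫ < ⟪γ + δ, p⟫ := by
          rw [inner_add_left]; have := hγ.2; linarith
        obtain ⟨c1, hc1, e1⟩ := ih γ hγ (by
          have := mea_lt hΦ hγ hγp; omega)
        obtain ⟨c2, hc2, e2⟩ := ih δ hδ (by
          have := mea_lt hΦ hδ hδp; omega)
        refine ⟨fun v => c1 v + c2 v,
          fun v => by dsimp only; have := hc1 v; have := hc2 v; linarith, ?_⟩
        rw [e1, e2, ← Finset.sum_add_distrib]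
        refine Finset.sum_congr rfl fun v _ => ?_
        dsimp only
        rw [add_smul]

/-- distinct simple roots have nonpositive inner products. -/
lemma simp_inner_nonpos (hΦ : IsRootSystem n Φ) (hp : ∀ α ∈ Φ, ⟪α, p⟫ ≠ 0)
    {α β : EuclideanSpace ℝ (Fin n)} (hα : α ∈ Simp Φ p) (hβ : β ∈ Simp Φ p)
    (hne : α ≠ β) : ⟪α, β⟫ ≤ 0 := by
  by_contra hlt
  push_neg at hlt
  have hroot : α - β ∈ Φ := pair_lemma hΦ hα.1.1 hβ.1.1 hne hlt
  rcases pos_or_neg hΦ hp hroot with h | h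
  · exact hα.2 ⟨α - β, h, β, hβ.1, (sub_add_cancel α β).symm⟩
  · rw [neg_sub] at h
    exact hβ.2 ⟨β - α, h, α, hα.1, (sub_add_cancel β α).symm⟩

/-- "linear independence" of simple roots, in coefficient form. -/
lemma simp_coeff_zero (hΦ : IsRootSystem n Φ) (hp : ∀ α ∈ Φ, ⟪α, p⟫ ≠ 0)
    (c : EuclideanSpace ℝ (Fin n) → ℝ)
    (hrel : ∑ v ∈ SimpF hΦ p, c v • v = 0) :
    ∀ v ∈ SimpF hΦ p, c v = 0 := by
  classical
  set S := SimpF hΦ p with hS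
  set Pp := S.filter (fun v => 0 < c v) with hPp
  set Pm := S.filter (fun v => c v < 0) with hPm
  set u : EuclideanSpace ℝ (Fin n) := ∑ v ∈ Pp, c v • v with hu
  have hsplit : ∑ v ∈ Pp, c v • v + ∑ v ∈ S.filter (fun v => ¬ 0 < c v), c v • v = 0 := by
    rw [Finset.sum_filter_add_sum_filter_not]; exact hrel
  have hPmsub : Pm ⊆ S.filter (fun v => ¬ 0 < c v) := by
    intro v hv
    rw [Finset.mem_filter] at hv ⊢
    exact ⟨hv.1, by have := hv.2; intro h; linarith⟩
  have hrest : ∑ v ∈ S.filter (fun v => ¬ 0 < c v), c v • v = ∑ v ∈ Pm, c v • v := by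
    symm
    apply Finset.sum_subset hPmsub
    intro x hx hnx
    rw [Finset.mem_filter] at hx hnx
    push_neg at hnx
    have h1 : ¬ 0 < c x := hx.2
    have h2 : ¬ c x < 0 := by
      intro h; exact absurd h (by
        have := hnx hx.1
        simpa [hPm, Finset.mem_filter, hx.1] using this)
    have : c x = 0 := le_antisymm (not_lt.mp h1) (not_lt.mp h2)
    rw [this, zero_smul]
  have huminus : u = ∑ v ∈ Pm, (-(c v)) • v := by
    have h0 : u + ∑ v ∈ Pm, c v • v = 0 := by rw [hu, ← hrest]; exact hsplit
    have : u = -∑ v ∈ Pm, c v • v := by linear_combination (norm := module) h0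
    rw [this, ← Finset.sum_neg_distrib]
    exact Finset.sum_congr rfl fun v _ => (neg_smul _ _).symm
  -- ⟪u, u⟫ ≤ 0
  have hinner : ⟪u, u⟫ ≤ 0 := by
    nth_rewrite 1 [huminus]
    rw [sum_inner]
    apply Finset.sum_nonpos
    intro b hb
    rw [hu, inner_sum]
    apply Finset.sum_nonpos
    intro a ha
    rw [real_inner_smul_left, real_inner_smul_right]
    rw [Finset.mem_filter] at ha hb
    have hab : b ≠ a := by
      rintro rfl
      exact absurd ha.2 (by have := hb.2; intro h; linarith)
    have hba : ⟪b, a⟫ ≤ 0 :=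
      simp_inner_nonpos hΦ hp (mem_SimpF.mp hb.1) (mem_SimpF.mp ha.1) hab
    have h1 : 0 < -(c b) := by linarith [hb.2]
    have h2 : 0 < c a := ha.2
    have h3 : c a * ⟪b, a⟫ ≤ 0 := mul_nonpos_iff.mpr (Or.inl ⟨h2.le, hba⟩)
    exact mul_nonpos_iff.mpr (Or.inl ⟨h1.le, h3⟩)
  have hu0 : u = 0 :=
    inner_self_eq_zero.mp (le_antisymm hinner real_inner_self_nonneg)
  have hPpe : Pp = ∅ := by
    by_contra hne
    have hpos : 0 < ⟪u, p⟫ := by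
      rw [hu, sum_inner]
      apply Finset.sum_pos
      · intro a ha
        rw [Finset.mem_filter] at ha
        rw [real_inner_smul_left]
        have h2 := (mem_SimpF.mp ha.1).1.2
        exact mul_pos ha.2 h2
      · exact Finset.nonempty_of_ne_empty hne
    rw [hu0] at hpos
    simp at hpos
  have hPme : Pm = ∅ := by
    by_contra hne
    have hpos : 0 < ⟪u, p⟫ := by
      rw [huminus, sum_inner]
      apply Finset.sum_pos
      · intro a ha
        rw [Finset.mem_filter] at ha
        rw [real_inner_smul_left]
        have h2 := (mem_SimpF.mp ha.1).1.2
        have : 0 < -(c a) := by linarith [ha.2]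
        exact mul_pos this h2
      · exact Finset.nonempty_of_ne_empty hne
    rw [hu0] at hpos
    simp at hpos
  intro v hv
  have h1 : ¬ 0 < c v := fun h => by
    have : v ∈ Pp := Finset.mem_filter.mpr ⟨hv, h⟩
    rw [hPpe] at this; exact absurd this (Finset.notMem_empty v)
  have h2 : ¬ c v < 0 := fun h => by
    have : v ∈ Pm := Finset.mem_filter.mpr ⟨hv, h⟩
    rw [hPme] at this; exact absurd this (Finset.notMem_empty v)
  linarith [not_lt.mp h1, not_lt.mp h2]

/-- a simple reflection permutes the positive roots other than its own root. -/
lemma simple_refl_pos (hΦ : IsRootSystem n Φ) (hp : ∀ α ∈ Φ, ⟪α, p⟫ ≠ 0)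
    {α β : EuclideanSpace ℝ (Fin n)} (hα : α ∈ Simp Φ p) (hβ : β ∈ Pos Φ p)
    (hne : β ≠ α) : affRefl α 0 β ∈ Pos Φ p := by
  have hαΦ : α ∈ Φ := hα.1.1
  have hαS : α ∈ SimpF hΦ p := mem_SimpF.mpr hα
  have hroot : affRefl α 0 β ∈ Φ := refl_root_mem hΦ hαΦ hβ.1
  by_contra hneg
  rcases pos_or_neg hΦ hp hroot with h | h
  · exact hneg h
  obtain ⟨c, hc, hcβ⟩ := pos_combo hΦ hβ
  obtain ⟨d, hd, hdβ⟩ := pos_combo hΦ h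
  -- find j ≠ α with c j > 0
  have hj : ∃ j ∈ SimpF hΦ p, j ≠ α ∧ 0 < c j := by
    by_contra hno
    push_neg at hno
    have hzero : ∀ v ∈ SimpF hΦ p, v ≠ α → c v • v = 0 := by
      intro v hv hvne
      have h1 := hno v hv hvne
      have h2 := hc v
      have : c v = 0 := le_antisymm h1 h2
      rw [this, zero_smul]
    have hβα : β = c α • α := by
      rw [hcβ, Finset.sum_eq_single_of_mem α hαS]
      intro v hv hvne
      exact hzero v hv hvne
    rcases hΦ.reduced α hαΦ (c α) (hβα ▸ hβ.1) with h1 | h1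
    · rw [h1, one_smul] at hβα
      exact hne hβα
    · rw [h1, neg_one_smul] at hβα
      have := hβ.2
      rw [hβα, inner_neg_left] at this
      have := hα.1.2
      linarith
  obtain ⟨j, hjS, hjne, hjpos⟩ := hj
  -- the relation ∑ (c v + d v - [v = α] * t) • v = 0
  set t : ℝ := 2 * ⟪β, α⟫ / ⟪α, α⟫ with ht
  have hrefl : affRefl α 0 β = β - t • α := refl0_apply α β
  have hrel : ∑ v ∈ SimpF hΦ p,
      (fun v => c v + d v - (if v = α then t else 0)) v • v = 0 := by
    have htα : t • α = ∑ v ∈ SimpF hΦ p, (if v = α then t else 0) • v := by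
      symm
      calc ∑ v ∈ SimpF hΦ p, (if v = α then t else 0) • v
          = ∑ v ∈ SimpF hΦ p, (if v = α then t • α else 0) := by
            refine Finset.sum_congr rfl fun v _ => ?_
            split
            · next hv => rw [hv]
            · rw [zero_smul]
        _ = t • α := by rw [Finset.sum_ite_eq' (SimpF hΦ p) α (fun _ => t • α), if_pos hαS]
    have expand : ∀ v, (fun v => c v + d v - (if v = α then t else 0)) v • v
        = c v • v + d v • v - (if v = α then t else 0) • v := by
      intro v; dsimp only; rw [sub_smul, add_smul]
    rw [Finset.sum_congr rfl fun v _ => expand v, Finset.sum_sub_distrib,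
      Finset.sum_add_distrib, ← hcβ, ← hdβ, ← htα, hrefl]
    module
  have hj0 := simp_coeff_zero hΦ hp _ hrel j hjS
  have hj1 : c j + d j - (if j = α then t else 0) = 0 := by simpa using hj0
  rw [if_neg hjne] at hj1
  have := hd j
  linarith

/-- every positive-root reflection is a product of simple reflections. -/
lemma gen_by_simples (hΦ : IsRootSystem n Φ) (hp : ∀ α ∈ Φ, ⟪α, p⟫ ≠ 0)
    {β : EuclideanSpace ℝ (Fin n)} (hβ : β ∈ Pos Φ p) :
    ∃ l : List (Equiv.Perm (EuclideanSpace ℝ (Fin n))),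
      (∀ r ∈ l, ∃ a ∈ Simp Φ p, r = affRefl a 0) ∧ l.prod = affRefl β 0 := by
  suffices H : ∀ N : ℕ, ∀ β ∈ Pos Φ p, Mea hΦ p β < N →
      ∃ l : List (Equiv.Perm (EuclideanSpace ℝ (Fin n))),
        (∀ r ∈ l, ∃ a ∈ Simp Φ p, r = affRefl a 0) ∧ l.prod = affRefl β 0 from
    H (Mea hΦ p β + 1) β hβ (Nat.lt_succ_self _)
  intro N
  induction N with
  | zero => intro β _ h; omega
  | succ N ih =>
      intro β hβ hM
      by_cases hs : β ∈ Simp Φ p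
      · refine ⟨[affRefl β 0], ?_, List.prod_singleton⟩
        intro r hr
        rw [List.mem_singleton] at hr
        exact ⟨β, hs, hr⟩
      -- find a simple root α with c α > 0 and ⟪β, α⟫ > 0
      obtain ⟨c, hc, hcβ⟩ := pos_combo hΦ hβ
      have hα : ∃ a ∈ SimpF hΦ p, 0 < c a ∧ 0 < ⟪β, a⟫ := by
        by_contra hno
        push_neg at hno
        have hsum : ∑ v ∈ SimpF hΦ p, c v * ⟪β, v⟫ ≤ 0 := by
          apply Finset.sum_nonpos
          intro v hv
          rcases eq_or_lt_of_le (hc v) with h0 | h0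
          · rw [← h0, zero_mul]
          · have := hno v hv h0
            exact mul_nonpos_iff.mpr (Or.inl ⟨hc v, this⟩)
        have hpos : 0 < ⟪β, β⟫ := inner_self_pos' hΦ hβ.1
        nth_rewrite 2 [hcβ] at hpos
        rw [inner_sum] at hpos
        have : ∑ v ∈ SimpF hΦ p, ⟪β, c v • v⟫ = ∑ v ∈ SimpF hΦ p, c v * ⟪β, v⟫ :=
          Finset.sum_congr rfl fun v _ => real_inner_smul_right β v (c v)
        rw [this] at hpos
        linarith
      obtain ⟨α, hαS, hcα, hβα⟩ := hα
      have hαsimp : α ∈ Simp Φ p := mem_SimpF.mp hαS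
      have hne : β ≠ α := fun h => hs (h ▸ hαsimp)
      have hβ' : affRefl α 0 β ∈ Pos Φ p := simple_refl_pos hΦ hp hαsimp hβ hne
      have hless : ⟪affRefl α 0 β, p⟫ < ⟪β, p⟫ := by
        rw [refl0_apply, inner_sub_left, real_inner_smul_left]
        have h1 : 0 < 2 * ⟪β, α⟫ / ⟪α, α⟫ :=
          div_pos (by linarith) (inner_self_pos' hΦ hαsimp.1.1)
        have h2 : 0 < ⟪α, p⟫ := hαsimp.1.2
        nlinarith
      obtain ⟨l', hl', hprod'⟩ := ih (affRefl α 0 β) hβ' (by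
        have := mea_lt hΦ hβ' hless; omega)
      refine ⟨affRefl α 0 :: (l' ++ [affRefl α 0]), ?_, ?_⟩
      · intro r hr
        rcases List.mem_cons.mp hr with h | h
        · exact ⟨α, hαsimp, h⟩
        rcases List.mem_append.mp h with h | h
        · exact hl' r h
        · rw [List.mem_singleton] at h
          exact ⟨α, hαsimp, h⟩
      · rw [List.prod_cons, List.prod_append, hprod', List.prod_singleton]
        have hconj := (OP.conj (OP_refl0 hΦ hαsimp.1.1) ((affRefl α 0) β))
        rw [affRefl_inv] at hconj
        rw [show (affRefl α 0) ((affRefl α 0) β) = β from affRefl_involutive α 0 β] at hconj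
        rw [mul_assoc] at hconj
        exact hconj

lemma refl0_self {b : EuclideanSpace ℝ (Fin n)} (h : ⟪b, b⟫ ≠ 0) : affRefl b 0 b = -b := by
  rw [refl0_apply, mul_div_assoc, div_self h, mul_one]
  module

/-- products of root reflections are orthogonal maps preserving `Φ`. -/
lemma OP_listprod (hΦ : IsRootSystem n Φ) :
    ∀ l : List (Equiv.Perm (EuclideanSpace ℝ (Fin n))),
      (∀ r ∈ l, ∃ b ∈ Φ, r = affRefl b 0) → OP Φ l.prod := by
  intro l
  induction l with
  | nil => intro _; rw [List.prod_nil]; exact OP.one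
  | cons s t ih =>
      intro h
      rw [List.prod_cons]
      obtain ⟨b, hb, rfl⟩ := h _ List.mem_cons_self
      exact (OP_refl0 hΦ hb).mul (ih fun r hr => h r (List.mem_cons_of_mem _ hr))

/-- The exchange lemma: a simple-reflection word sending the positive root `a`
to a negative root absorbs the reflection `r_a`. -/
lemma exchange (hΦ : IsRootSystem n Φ) (hp : ∀ α ∈ Φ, ⟪α, p⟫ ≠ 0) :
    ∀ l : List (Equiv.Perm (EuclideanSpace ℝ (Fin n))),
      (∀ r ∈ l, ∃ b ∈ Simp Φ p, r = affRefl b 0) →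
      ∀ a ∈ Pos Φ p, -(l.prod a) ∈ Pos Φ p →
      ∃ l' : List (Equiv.Perm (EuclideanSpace ℝ (Fin n))),
        (∀ r ∈ l', ∃ b ∈ Simp Φ p, r = affRefl b 0) ∧
        l'.length + 1 = l.length ∧ l.prod * affRefl a 0 = l'.prod := by
  intro l
  induction l with
  | nil =>
      intro _ a ha hneg
      rw [List.prod_nil] at hneg
      exact absurd hneg (by rw [Equiv.Perm.one_apply]; exact neg_not_pos ha)
  | cons s t ih =>
      intro hword a ha hneg
      obtain ⟨b, hb, hsb⟩ := hword s List.mem_cons_self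
      have htword : ∀ r ∈ t, ∃ b ∈ Simp Φ p, r = affRefl b 0 :=
        fun r hr => hword r (List.mem_cons_of_mem _ hr)
      have hOPt : OP Φ t.prod := OP_listprod hΦ t (by
        intro r hr
        obtain ⟨b', hb', rfl⟩ := htword r hr
        exact ⟨b', hb'.1.1, rfl⟩)
      have haΦ : a ∈ Φ := ha.1
      have hγΦ : t.prod a ∈ Φ := hOPt.maps a haΦ
      rw [List.prod_cons] at hneg
      rw [Equiv.Perm.mul_apply] at hneg
      rcases pos_or_neg hΦ hp hγΦ with hγ | hγ
      · -- t.prod a is positive, so s must be the reflection in it: t.prod a = b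
        have hγb : t.prod a = b := by
          by_contra hne
          have := simple_refl_pos hΦ hp hb hγ hne
          rw [← hsb] at this
          exact neg_not_pos this hneg
        have hconj := OP.conj hOPt a
        rw [hγb] at hconj
        refine ⟨t, htword, by simp, ?_⟩
        have h1 : t.prod * affRefl a 0 = affRefl b 0 * t.prod := by
          rw [← hconj]
          group
        rw [List.prod_cons, hsb, mul_assoc, h1, ← mul_assoc, affRefl_sq, one_mul]
      · -- t.prod a is negative: use the inductive hypothesis
        obtain ⟨t', ht', hlen, hprod⟩ := ih htword a ha hγ
        refine ⟨s :: t', ?_, by simp [← hlen], ?_⟩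
        · intro r hr
          rcases List.mem_cons.mp hr with h | h
          · exact h ▸ hword s List.mem_cons_self
          · exact ht' r h
        · rw [List.prod_cons, List.prod_cons, mul_assoc, hprod]

/-- a product of simple reflections preserving the positive roots is trivial. -/
lemma simple_word_id (hΦ : IsRootSystem n Φ) (hp : ∀ α ∈ Φ, ⟪α, p⟫ ≠ 0) :
    ∀ N : ℕ, ∀ l : List (Equiv.Perm (EuclideanSpace ℝ (Fin n))), l.length ≤ N →
      (∀ r ∈ l, ∃ b ∈ Simp Φ p, r = affRefl b 0) →
      (∀ γ ∈ Pos Φ p, l.prod γ ∈ Pos Φ p) → l.prod = 1 := by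
  intro N
  induction N with
  | zero =>
      intro l hlen _ _
      rw [List.length_eq_zero_iff.mp (Nat.le_zero.mp hlen)]
      rfl
  | succ N ih =>
      intro l hlen hword hpos
      rcases List.eq_nil_or_concat l with rfl | ⟨t, s, rfl⟩
      · rfl
      rw [List.concat_eq_append] at hlen hword hpos ⊢
      obtain ⟨b, hb, hsb⟩ := hword s (by simp)
      have htword : ∀ r ∈ t, ∃ b ∈ Simp Φ p, r = affRefl b 0 :=
        fun r hr => hword r (by simp [hr])
      have hOPt : OP Φ t.prod := OP_listprod hΦ t (by
        intro r hr
        obtain ⟨b', hb', rfl⟩ := htword r hr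
        exact ⟨b', hb'.1.1, rfl⟩)
      have hbb : ⟪b, b⟫ ≠ 0 := inner_self_ne hΦ hb.1.1
      have hwprod : (t ++ [s]).prod = t.prod * affRefl b 0 := by
        rw [List.prod_append, List.prod_singleton, hsb]
      rcases pos_or_neg hΦ hp (hOPt.maps b hb.1.1) with hq | hq
      · -- q b positive: contradiction with w b ∈ Pos
        exfalso
        have hwb : (t ++ [s]).prod b = -(t.prod b) := by
          rw [hwprod, Equiv.Perm.mul_apply, refl0_self hbb, hOPt.map_neg]
        have := hpos b hb.1
        rw [hwb] at this
        exact neg_not_pos hq this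
      · -- q b negative: exchange shortens
        obtain ⟨l'', hl'', hlen'', hprod''⟩ := exchange hΦ hp t htword b hb.1 hq
        have hww : (t ++ [s]).prod = l''.prod := by rw [hwprod, hprod'']
        rw [hww]
        apply ih l''
        · have h2 : (t ++ [s]).length = t.length + 1 := by simp
          rw [h2] at hlen
          omega
        · exact hl''
        · intro γ hγ
          rw [← hww]
          exact hpos γ hγ

/-- an element of `W₀` fixing a regular point is the identity. -/
lemma fix_regular_eq_one (hΦ : IsRootSystem n Φ) {p : EuclideanSpace ℝ (Fin n)}
    (hp : ∀ α ∈ Φ, ⟪α, p⟫ ≠ 0) {w : Equiv.Perm (EuclideanSpace ℝ (Fin n))}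
    (hw : w ∈ linW Φ) (hfix : w p = p) : w = 1 := by
  obtain ⟨l, hl, hprod⟩ := linW_word hw
  -- turn the root-reflection word into a simple-reflection word
  have hsimpleword : ∀ l₀ : List (Equiv.Perm (EuclideanSpace ℝ (Fin n))),
      (∀ r ∈ l₀, r ∈ linR Φ) →
      ∃ l' : List (Equiv.Perm (EuclideanSpace ℝ (Fin n))),
        (∀ r ∈ l', ∃ b ∈ Simp Φ p, r = affRefl b 0) ∧ l'.prod = l₀.prod := by
    intro l₀
    induction l₀ with
    | nil => intro _; exact ⟨[], by simp, by simp⟩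
    | cons r t ih =>
        intro hmem
        obtain ⟨t', ht', et'⟩ := ih fun x hx => hmem x (List.mem_cons_of_mem _ hx)
        obtain ⟨β, hβ, rfl⟩ := hmem r List.mem_cons_self
        have : ∃ c : List (Equiv.Perm (EuclideanSpace ℝ (Fin n))),
            (∀ x ∈ c, ∃ b ∈ Simp Φ p, x = affRefl b 0) ∧ c.prod = affRefl β 0 := by
          rcases pos_or_neg hΦ hp hβ with h | h
          · exact gen_by_simples hΦ hp h
          · obtain ⟨c, hc, ec⟩ := gen_by_simples hΦ hp h
            exact ⟨c, hc, by rw [ec, refl0_neg_root]⟩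
        obtain ⟨c, hc, ec⟩ := this
        refine ⟨c ++ t', ?_, by rw [List.prod_append, ec, et', List.prod_cons]⟩
        intro x hx
        rcases List.mem_append.mp hx with h | h
        exacts [hc x h, ht' x h]
  obtain ⟨l', hl', el'⟩ := hsimpleword l hl
  have hOP : OP Φ w := OP_linW hΦ hw
  have hposmap : ∀ γ ∈ Pos Φ p, l'.prod γ ∈ Pos Φ p := by
    intro γ hγ
    rw [el', hprod]
    refine ⟨hOP.maps γ hγ.1, ?_⟩
    have : ⟪w γ, p⟫ = ⟪γ, p⟫ := by
      nth_rewrite 1 [← hfix]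
      exact hOP.inner_map γ p
    rw [this]
    exact hγ.2
  have := simple_word_id hΦ hp l'.length l' le_rfl hl' hposmap
  rw [el', hprod] at this
  exact this

end Simple

/-- a subspace not contained in finitely many subspaces avoids all of them. -/
lemma avoid_subspaces (K : Submodule ℝ (EuclideanSpace ℝ (Fin n)))
    (s : Finset (EuclideanSpace ℝ (Fin n)))
    (f : EuclideanSpace ℝ (Fin n) → Submodule ℝ (EuclideanSpace ℝ (Fin n)))
    (h : ∀ a ∈ s, ¬ K ≤ f a) : ∃ x ∈ K, ∀ a ∈ s, x ∉ f a := by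
  classical
  induction s using Finset.induction_on with
  | empty => exact ⟨0, K.zero_mem, by simp⟩
  | @insert a s ha ih =>
      obtain ⟨x, hxK, hx⟩ := ih fun b hb => h b (Finset.mem_insert_of_mem hb)
      obtain ⟨y, hyK, hy⟩ := SetLike.not_le_iff_exists.mp (h a (Finset.mem_insert_self a s))
      by_cases hxa : x ∉ f a
      · refine ⟨x, hxK, ?_⟩
        intro b hb
        rcases Finset.mem_insert.mp hb with rfl | hb
        exacts [hxa, hx b hb]
      push_neg at hxa
      have hsub : ∀ b ∈ insert a s, {t : ℝ | x + t • y ∈ f b}.Subsingleton := by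
        intro b hb t₁ h₁ t₂ h₂
        by_contra hne
        have hyb : y ∈ f b := by
          have hdiff : (t₁ - t₂) • y ∈ f b := by
            have := Submodule.sub_mem (f b) h₁ h₂
            rw [show x + t₁ • y - (x + t₂ • y) = (t₁ - t₂) • y by module] at this
            exact this
          have h0 : (t₁ - t₂) ≠ 0 := sub_ne_zero.mpr hne
          have := Submodule.smul_mem (f b) (t₁ - t₂)⁻¹ hdiff
          rwa [smul_smul, inv_mul_cancel₀ h0, one_smul] at this
        rcases Finset.mem_insert.mp hb with rfl | hb'
        · exact hy hyb
        · apply hx b hb'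
          have := Submodule.sub_mem (f b) h₁ (Submodule.smul_mem (f b) t₁ hyb)
          rwa [show x + t₁ • y - t₁ • y = x by module] at this
      have hfin : (⋃ b ∈ (insert a s : Finset (EuclideanSpace ℝ (Fin n))),
          {t : ℝ | x + t • y ∈ f b}).Finite :=
        Set.Finite.biUnion (insert a s).finite_toSet
          (fun b hb => Set.Subsingleton.finite (hsub b hb))
      obtain ⟨t, ht⟩ := hfin.infinite_compl.nonempty
      refine ⟨x + t • y, Submodule.add_mem K hxK (Submodule.smul_mem K t hyK), ?_⟩
      intro b hb hbad
      apply ht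
      exact Set.mem_biUnion hb hbad

section FixMov

variable {Φ : Set (EuclideanSpace ℝ (Fin n))} {w : Equiv.Perm (EuclideanSpace ℝ (Fin n))}

/-- `w - 1` as a linear map. -/
def Lmap (h : OP Φ w) : EuclideanSpace ℝ (Fin n) →ₗ[ℝ] EuclideanSpace ℝ (Fin n) where
  toFun x := w x - x
  map_add' x y := by
    show w (x + y) - (x + y) = (w x - x) + (w y - y)
    rw [h.map_add]; abel
  map_smul' c x := by
    show w (c • x) - c • x = c • (w x - x)
    rw [h.map_smul, smul_sub]

/-- the fixed subspace of `w`. -/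
def FixS (h : OP Φ w) : Submodule ℝ (EuclideanSpace ℝ (Fin n)) := LinearMap.ker (Lmap h)

lemma mem_FixS {h : OP Φ w} {x : EuclideanSpace ℝ (Fin n)} :
    x ∈ FixS h ↔ w x = x := by
  rw [FixS, LinearMap.mem_ker]
  show w x - x = 0 ↔ _
  rw [sub_eq_zero]

lemma orthFix_eq_range (h : OP Φ w) : (FixS h)ᗮ = LinearMap.range (Lmap h) := by
  have hle : LinearMap.range (Lmap h) ≤ (FixS h)ᗮ := by
    rintro z ⟨y, rfl⟩
    rw [Submodule.mem_orthogonal]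
    intro u hu
    have hufix : w u = u := mem_FixS.mp hu
    show ⟪u, w y - y⟫ = 0
    rw [inner_sub_right]
    nth_rewrite 1 [← hufix]
    rw [h.inner_map u y]
    ring
  symm
  apply Submodule.eq_of_le_of_finrank_eq hle
  have h1 := LinearMap.finrank_range_add_finrank_ker (Lmap h)
  have h2 := Submodule.finrank_add_finrank_orthogonal (K := FixS h)
  rw [FixS] at *
  omega

/-- if `w ∈ W₀` is not the identity, some root lies in its moved space. -/
lemma root_in_mov (hΦ : IsRootSystem n Φ) (hw : w ∈ linW Φ) (hne : w ≠ 1) :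
    ∃ α ∈ Φ, ∃ y, w y - y = α := by
  have h : OP Φ w := OP_linW hΦ hw
  by_contra hno
  push_neg at hno
  have hnotin : ∀ α ∈ Φ, ¬ FixS h ≤ (ℝ ∙ α)ᗮ := by
    intro α hα hle
    have : α ∈ (FixS h)ᗮ := by
      rw [Submodule.mem_orthogonal]
      intro u hu
      have := hle hu
      rw [Submodule.mem_orthogonal] at this
      have h2 := this α (Submodule.mem_span_singleton_self α)
      rw [real_inner_comm] at h2
      exact h2
    rw [orthFix_eq_range h] at this
    obtain ⟨y, hy⟩ := this
    exact hno α hα y hy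
  obtain ⟨x, hxK, hx⟩ := avoid_subspaces (FixS h) hΦ.finite.toFinset
    (fun α => (ℝ ∙ α)ᗮ) (fun α hα => hnotin α (hΦ.finite.mem_toFinset.mp hα))
  have hreg : ∀ α ∈ Φ, ⟪α, x⟫ ≠ 0 := by
    intro α hα h0
    apply hx α (hΦ.finite.mem_toFinset.mpr hα)
    rw [Submodule.mem_orthogonal]
    rintro v hv
    obtain ⟨c, rfl⟩ := Submodule.mem_span_singleton.mp hv
    rw [real_inner_smul_left, h0, mul_zero]
  have hreg' : ∀ α ∈ Φ, ⟪α, x⟫ ≠ 0 := hreg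
  exact hne (fix_regular_eq_one hΦ hreg' hw (mem_FixS.mp hxK))

/-- Carter's bound: an element of `W₀` whose fixed space has codimension at most `d`
is a product of at most `d` reflections. -/
lemma carter_aux (hΦ : IsRootSystem n Φ) :
    ∀ d : ℕ, ∀ w : Equiv.Perm (EuclideanSpace ℝ (Fin n)), ∀ hw : w ∈ linW Φ,
      n ≤ d + Module.finrank ℝ (FixS (OP_linW hΦ hw)) →
      ∃ l : List (Equiv.Perm (EuclideanSpace ℝ (Fin n))),
        (∀ r ∈ l, r ∈ linR Φ) ∧ l.prod = w ∧ l.length ≤ d := by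
  intro d
  induction d with
  | zero =>
      intro w hw hrank
      have hfr : Module.finrank ℝ (FixS (OP_linW hΦ hw)) = n := by
        have := Submodule.finrank_le (FixS (OP_linW hΦ hw))
        rw [finrank_euclideanSpace_fin] at this
        omega
      have htop : FixS (OP_linW hΦ hw) = ⊤ :=
        Submodule.eq_top_of_finrank_eq (by rw [hfr, finrank_euclideanSpace_fin])
      have : w = 1 := by
        apply Equiv.ext
        intro x
        have : x ∈ FixS (OP_linW hΦ hw) := htop ▸ Submodule.mem_top
        rw [mem_FixS.mp this]
        rfl
      exact ⟨[], by simp, by rw [List.prod_nil, this], by simp⟩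
  | succ d ih =>
      intro w hw hrank
      by_cases hne : w = 1
      · exact ⟨[], by simp, by rw [List.prod_nil, hne], by simp⟩
      obtain ⟨α, hα, y, hy⟩ := root_in_mov hΦ hw hne
      set h : OP Φ w := OP_linW hΦ hw
      have hαα : ⟪α, α⟫ ≠ 0 := inner_self_ne hΦ hα
      have hw' : affRefl α 0 * w ∈ linW Φ :=
        mul_mem (Subgroup.subset_closure ⟨α, hα, rfl⟩) hw
      set h' : OP Φ (affRefl α 0 * w) := OP_linW hΦ hw'
      -- the fixed space grows: FixS h ⊔ ℝ∙y ≤ FixS h'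
      have hyfix : (affRefl α 0 * w) y = y := by
        rw [Equiv.Perm.mul_apply]
        have hwy : w y = y + α := by rw [← hy]; abel
        rw [hwy, refl0_apply, inner_add_left]
        have hyα : 2 * ⟪y, α⟫ = -⟪α, α⟫ := by
          have h1 : ⟪w y, w y⟫ = ⟪y, y⟫ := h.inner_map y y
          rw [hwy] at h1
          simp only [inner_add_left, inner_add_right] at h1
          rw [real_inner_comm α y]
          have hcomm : ⟪y, α⟫ = ⟪α, y⟫ := real_inner_comm α y
          linarith
        rw [show 2 * (⟪y,α⟫ + ⟪α,α⟫) / ⟪α,α⟫ = (2*⟪y,α⟫ + 2*⟪α,α⟫)/⟪α,α⟫ by ring, hyα,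
          show (-⟪α,α⟫ + 2*⟪α,α⟫)/⟪α,α⟫ = ⟪α,α⟫/⟪α,α⟫ by ring, div_self hαα, one_smul]
        abel
      have hfixle : FixS h ≤ FixS h' := by
        intro z hz
        have hzfix : w z = z := mem_FixS.mp hz
        have hzα : ⟪z, α⟫ = 0 := by
          have h1 : ⟪z, w y - y⟫ = 0 := by
            rw [inner_sub_right]
            nth_rewrite 1 [← hzfix]
            rw [h.inner_map]
            ring
          rwa [hy] at h1
        rw [mem_FixS, Equiv.Perm.mul_apply, hzfix, refl0_apply, hzα]
        norm_num
      have hynotfix : y ∉ FixS h := by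
        rw [mem_FixS]
        intro hyy
        rw [hyy] at hy
        rw [sub_self] at hy
        exact hΦ.nonzero α hα hy.symm
      have hlt : Module.finrank ℝ (FixS h) < Module.finrank ℝ (FixS h') := by
        apply Submodule.finrank_lt_finrank_of_lt
        rw [lt_iff_le_and_ne]
        refine ⟨hfixle, ?_⟩
        intro heq
        rw [heq] at hynotfix
        exact hynotfix (mem_FixS.mpr hyfix)
      obtain ⟨l', hl', hprod', hlen'⟩ := ih (affRefl α 0 * w) hw' (by omega)
      refine ⟨affRefl α 0 :: l', ?_, ?_, by simp [hlen']⟩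
      · intro r hr
        rcases List.mem_cons.mp hr with rfl | hr
        · exact ⟨α, hα, rfl⟩
        · exact hl' r hr
      · rw [List.prod_cons, hprod', ← mul_assoc, affRefl_sq, one_mul]

/-- every element of `W₀` is a product of at most `n` root reflections. -/
lemma carter (hΦ : IsRootSystem n Φ) (hw : w ∈ linW Φ) :
    ∃ l : List (Equiv.Perm (EuclideanSpace ℝ (Fin n))),
      (∀ r ∈ l, r ∈ linR Φ) ∧ l.prod = w ∧ l.length ≤ n :=
  carter_aux hΦ n w hw (by omega)

end FixMov

end RootSys

section Lattice

variable {Φ : Set (EuclideanSpace ℝ (Fin n))} {α : EuclideanSpace ℝ (Fin n)}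

/-- `lam` is an integral combination of `m` coroots. -/
def IntComb (Φ : Set (EuclideanSpace ℝ (Fin n))) (m : ℕ)
    (lam : EuclideanSpace ℝ (Fin n)) : Prop :=
  ∃ (c : Fin m → ℤ) (β : Fin m → EuclideanSpace ℝ (Fin n)),
    (∀ i, β i ∈ Φ) ∧ lam = ∑ i, c i • coroot (β i)

lemma IntComb_zero : IntComb Φ 0 0 :=
  ⟨fun i => i.elim0, fun i => i.elim0, fun i => i.elim0, by simp⟩

lemma intcomb_inner_int (hΦ : IsRootSystem n Φ) {m : ℕ} {lam : EuclideanSpace ℝ (Fin n)}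
    (h : IntComb Φ m lam) (hα : α ∈ Φ) : ∃ z : ℤ, (z : ℝ) = ⟪lam, α⟫ := by
  obtain ⟨c, β, hβ, rfl⟩ := h
  choose z hz using fun i => coroot_inner_int hΦ (hβ i) hα
  refine ⟨∑ i, c i * z i, ?_⟩
  rw [sum_inner]
  push_cast
  refine Finset.sum_congr rfl fun i _ => ?_
  rw [← Int.cast_smul_eq_zsmul ℝ (c i) (coroot (β i)), real_inner_smul_left, hz i]

lemma intcomb_step (hΦ : IsRootSystem n Φ) {m : ℕ} {lam : EuclideanSpace ℝ (Fin n)}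
    (h : IntComb Φ m lam) (hα : α ∈ Φ) (j : ℤ) :
    IntComb Φ (m + 1) (affRefl α j lam) := by
  obtain ⟨z, hz⟩ := intcomb_inner_int hΦ h hα
  obtain ⟨c, β, hβ, hsum⟩ := h
  refine ⟨Fin.snoc c (j - z), Fin.snoc β α, ?_, ?_⟩
  · intro i
    refine Fin.lastCases ?_ ?_ i
    · rw [Fin.snoc_last]; exact hα
    · intro i'; rw [Fin.snoc_castSucc]; exact hβ i'
  · rw [Fin.sum_univ_castSucc]
    simp only [Fin.snoc_castSucc, Fin.snoc_last]
    rw [← hsum, affRefl_apply, ← hz]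
    rw [← Int.cast_smul_eq_zsmul ℝ (j - z) (coroot α)]
    push_cast
    module

lemma word_intcomb (hΦ : IsRootSystem n Φ) :
    ∀ l : List (Equiv.Perm (EuclideanSpace ℝ (Fin n))), (∀ r ∈ l, r ∈ affR Φ) →
      IntComb Φ l.length (l.prod 0) := by
  intro l
  induction l with
  | nil => intro _; simpa using IntComb_zero
  | cons r t ih =>
      intro h
      obtain ⟨a, ha, j, rfl⟩ := h r List.mem_cons_self
      rw [List.prod_cons, Equiv.Perm.mul_apply, List.length_cons]
      exact intcomb_step hΦ (ih fun x hx => h x (List.mem_cons_of_mem _ hx)) ha j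

lemma linW_fix_zero {w : Equiv.Perm (EuclideanSpace ℝ (Fin n))} (hw : w ∈ linW Φ) :
    w 0 = 0 := by
  induction hw using Subgroup.closure_induction with
  | mem r hr =>
      obtain ⟨a, _, rfl⟩ := hr
      simp
  | one => rfl
  | mul x y hx hy ihx ihy => rw [Equiv.Perm.mul_apply, ihy, ihx]
  | inv x hx ihx =>
      apply x.injective
      rw [perm_apply_inv_self, ihx]

@[simp] lemma transPerm_apply (a x : EuclideanSpace ℝ (Fin n)) :
    transPerm a x = x + a := rfl

lemma transPerm_zero : transPerm (0 : EuclideanSpace ℝ (Fin n)) = 1 := by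
  apply Equiv.ext; intro x; simp

lemma transPerm_mul (a b : EuclideanSpace ℝ (Fin n)) :
    transPerm a * transPerm b = transPerm (a + b) := by
  apply Equiv.ext; intro x
  simp [Equiv.Perm.mul_apply]
  abel

lemma refl_mul_refl (hαα : ⟪α, α⟫ ≠ 0) (c : ℤ) :
    affRefl α c * affRefl α 0 = transPerm ((c : ℝ) • coroot α) := by
  apply Equiv.ext; intro x
  rw [Equiv.Perm.mul_apply, affRefl_apply, affRefl_apply, transPerm_apply]
  rw [inner_sub_left, real_inner_smul_left, coroot_inner_self hαα]
  module

lemma refl_conj_trans (hαα : ⟪α, α⟫ ≠ 0) (μ : EuclideanSpace ℝ (Fin n)) :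
    affRefl α 0 * transPerm μ * affRefl α 0 = transPerm (affRefl α 0 μ) := by
  apply Equiv.ext; intro x
  rw [Equiv.Perm.mul_apply, Equiv.Perm.mul_apply, transPerm_apply, transPerm_apply,
    refl0_add]
  congr 1
  exact affRefl_involutive α 0 x

lemma map_coroot {w : Equiv.Perm (EuclideanSpace ℝ (Fin n))} (h : OP Φ w)
    (γ : EuclideanSpace ℝ (Fin n)) : w (coroot γ) = coroot (w γ) := by
  rw [coroot, coroot, h.map_smul, h.inner_map]

lemma intcomb_refl (hΦ : IsRootSystem n Φ) (hα : α ∈ Φ) {m : ℕ}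
    {μ : EuclideanSpace ℝ (Fin n)} (h : IntComb Φ m μ) :
    IntComb Φ m (affRefl α 0 μ) := by
  obtain ⟨c, β, hβ, rfl⟩ := h
  have hOP : OP Φ (affRefl α 0) := OP_refl0 hΦ hα
  refine ⟨c, fun i => affRefl α 0 (β i), fun i => refl_root_mem hΦ hα (hβ i), ?_⟩
  have hsum : ∀ (s : Finset (Fin m)), affRefl α 0 (∑ i ∈ s, c i • coroot (β i))
      = ∑ i ∈ s, c i • coroot (affRefl α 0 (β i)) := by
    intro s
    induction s using Finset.induction_on with
    | empty => simpa using hOP.map_zero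
    | @insert a s ha ih =>
        rw [Finset.sum_insert ha, Finset.sum_insert ha, hOP.map_add, ih]
        congr 1
        rw [← Int.cast_smul_eq_zsmul ℝ (c a), hOP.map_smul, map_coroot hOP,
          Int.cast_smul_eq_zsmul ℝ (c a)]
  exact hsum Finset.univ

/-- the key upper bound: `t_lam * w0` is a product of at most `k + n` affine
reflections when `lam` is an integral combination of `k` coroots. -/
lemma upper_bound_word (hΦ : IsRootSystem n Φ) :
    ∀ k : ℕ, ∀ lam : EuclideanSpace ℝ (Fin n), IntComb Φ k lam →
      ∀ w0 : Equiv.Perm (EuclideanSpace ℝ (Fin n)), w0 ∈ linW Φ →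
      ∃ l : List (Equiv.Perm (EuclideanSpace ℝ (Fin n))),
        (∀ r ∈ l, r ∈ affR Φ) ∧ l.prod = transPerm lam * w0 ∧ l.length ≤ k + n := by
  intro k
  induction k with
  | zero =>
      intro lam hlam w0 hw0
      obtain ⟨c, β, hβ, hsum⟩ := hlam
      have h0 : lam = 0 := by rw [hsum]; simp
      obtain ⟨l, hl, hprod, hlen⟩ := carter hΦ hw0
      refine ⟨l, ?_, ?_, by omega⟩
      · intro r hr
        obtain ⟨a, ha, rfl⟩ := hl r hr
        exact ⟨a, ha, 0, rfl⟩
      · rw [hprod, h0, transPerm_zero, one_mul]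
  | succ k ih =>
      intro lam hlam w0 hw0
      obtain ⟨c, β, hβ, rfl⟩ := hlam
      set α := β (Fin.last k) with hαdef
      have hα : α ∈ Φ := hβ _
      have hαα : ⟪α, α⟫ ≠ 0 := inner_self_ne hΦ hα
      set cl : ℤ := c (Fin.last k) with hcl
      set μ : EuclideanSpace ℝ (Fin n) :=
        ∑ i : Fin k, c i.castSucc • coroot (β i.castSucc) with hμ
      have hμcomb : IntComb Φ k μ :=
        ⟨fun i => c i.castSucc, fun i => β i.castSucc, fun i => hβ _, rfl⟩
      have hsplit : ∑ i, c i • coroot (β i) = μ + cl • coroot α := by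
        rw [Fin.sum_univ_castSucc]
      have hμ' : IntComb Φ k (affRefl α 0 μ) := intcomb_refl hΦ hα hμcomb
      have hw0' : affRefl α 0 * w0 ∈ linW Φ :=
        mul_mem (Subgroup.subset_closure ⟨α, hα, rfl⟩) hw0
      obtain ⟨l', hl', hprod', hlen'⟩ := ih (affRefl α 0 μ) hμ' (affRefl α 0 * w0) hw0'
      refine ⟨affRefl α cl :: l', ?_, ?_, by simp [List.length_cons]; omega⟩
      · intro r hr
        rcases List.mem_cons.mp hr with rfl | hr
        · exact ⟨α, hα, cl, rfl⟩
        · exact hl' r hr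
      · rw [List.prod_cons, hprod']
        have e1 : affRefl α cl * (transPerm (affRefl α 0 μ) * (affRefl α 0 * w0))
            = affRefl α cl * ((affRefl α 0 * transPerm μ * affRefl α 0) * (affRefl α 0 * w0)) := by
          rw [refl_conj_trans hαα]
        rw [e1]
        have e2 : affRefl α cl * (affRefl α 0 * transPerm μ * affRefl α 0 * (affRefl α 0 * w0))
            = (affRefl α cl * affRefl α 0) * transPerm μ * w0 := by
          have hsq := affRefl_sq α 0
          calc affRefl α cl * (affRefl α 0 * transPerm μ * affRefl α 0 * (affRefl α 0 * w0))
              = affRefl α cl * (affRefl α 0 * transPerm μ * (affRefl α 0 * affRefl α 0) * w0) := by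
                group
            _ = affRefl α cl * (affRefl α 0 * transPerm μ * w0) := by rw [hsq, mul_one]
            _ = (affRefl α cl * affRefl α 0) * transPerm μ * w0 := by group
        rw [e2, refl_mul_refl hαα, transPerm_mul, hsplit]
        congr 2
        rw [Int.cast_smul_eq_zsmul ℝ cl]
        abel

lemma lattice_intcomb {lam : EuclideanSpace ℝ (Fin n)} (hlam : lam ∈ corootLattice Φ) :
    ∃ m, IntComb Φ m lam := by
  induction hlam using AddSubgroup.closure_induction with
  | mem x hx =>
      obtain ⟨a, ha, rfl⟩ := hx
      exact ⟨1, fun _ => 1, fun _ => a, fun _ => ha, by simp⟩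
  | zero => exact ⟨0, IntComb_zero⟩
  | add x y hx hy ihx ihy =>
      obtain ⟨m₁, c₁, β₁, hβ₁, e₁⟩ := ihx
      obtain ⟨m₂, c₂, β₂, hβ₂, e₂⟩ := ihy
      refine ⟨m₁ + m₂, Fin.addCases c₁ c₂, Fin.addCases β₁ β₂, ?_, ?_⟩
      · intro i
        refine Fin.addCases ?_ ?_ i <;> intro j <;>
          simp only [Fin.addCases_left, Fin.addCases_right]
        exacts [hβ₁ j, hβ₂ j]
      · rw [Fin.sum_univ_add]
        simp only [Fin.addCases_left, Fin.addCases_right]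
        rw [e₁, e₂]
  | neg x hx ihx =>
      obtain ⟨m, c, β, hβ, e⟩ := ihx
      refine ⟨m, fun i => -(c i), β, hβ, ?_⟩
      rw [show -x = -(∑ i, c i • coroot (β i)) from by rw [← e], ← Finset.sum_neg_distrib]
      exact Finset.sum_congr rfl fun i _ => (neg_smul _ _).symm

end Lattice

end CarterAux

open CarterAux

theorem reflection_length_bounds (n : ℕ) (hn : 1 ≤ n) (Φ : Set (EuclideanSpace ℝ (Fin n))) (hΦ : IsRootSystem n Φ)
    (lam : EuclideanSpace ℝ (Fin n)) (hlam : lam ∈ corootLattice Φ) (k : ℕ) (hk : intDim Φ lam = k)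
    (w0 : Equiv.Perm (EuclideanSpace ℝ (Fin n))) (hw0 : w0 ∈ linW Φ) :
    (k : ℕ∞) ≤ wordLength (affR Φ) (transPerm lam * w0) ∧
      wordLength (affR Φ) (transPerm lam * w0) ≤ ((k + n : ℕ) : ℕ∞) := by
  classical
  have hw0fix : w0 0 = 0 := linW_fix_zero hw0
  have hlam0 : (transPerm lam * w0) 0 = lam := by
    rw [Equiv.Perm.mul_apply, hw0fix, transPerm_apply, zero_add]
  constructor
  · rw [wordLength]
    apply le_sInf
    rintro b ⟨l, hl, hprod, rfl⟩
    have hic : IntComb Φ l.length (l.prod 0) := word_intcomb hΦ l hl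
    rw [hprod, hlam0] at hic
    obtain ⟨c, β, hβ, hsum⟩ := hic
    have hle : intDim Φ lam ≤ l.length := Nat.sInf_le ⟨c, β, hβ, hsum⟩
    rw [hk] at hle
    exact_mod_cast hle
  · obtain ⟨m, hm⟩ := lattice_intcomb hlam
    have hkmem : intDim Φ lam ∈ {k : ℕ | ∃ (c : Fin k → ℤ)
        (α : Fin k → EuclideanSpace ℝ (Fin n)),
        (∀ i, α i ∈ Φ) ∧ lam = ∑ i, c i • coroot (α i)} := Nat.sInf_mem ⟨m, hm⟩
    rw [hk] at hkmem
    obtain ⟨l, hl, hprod, hlen⟩ := upper_bound_word hΦ k lam hkmem w0 hw0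
    have h1 : wordLength (affR Φ) (transPerm lam * w0) ≤ (l.length : ℕ∞) :=
      sInf_le ⟨l, hl, hprod, rfl⟩
    exact le_trans h1 (by exact_mod_cast hlen)


end
end

section
/- Let W = ℤ/2 * ℤ/2 * ℤ/2 be the free product of three groups of order two (the free Coxeter group on three generators), with standard generators a, b, c, and let R = {w s w⁻¹ : w ∈ W, s ∈ {a, b, c}} be the set of conjugates of the generators. Then for every integer n ≥ 1, the reflection length of (abc)^n with respect to R equals n + 2. -/
noncomputable section

/-- The relations `a² = b² = c² = 1` for the free Coxeter group on three generators. -/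
def triRels : Set (FreeGroup (Fin 3)) :=
  {r | ∃ i : Fin 3, r = FreeGroup.of i * FreeGroup.of i}

/-- The free Coxeter group on three generators `ℤ/2 * ℤ/2 * ℤ/2`. -/
abbrev FreeCoxeter3 := PresentedGroup triRels

/-- The set of reflections: all conjugates of the three standard generators. -/
def triR : Set FreeCoxeter3 :=
  {x | ∃ (w : FreeCoxeter3) (i : Fin 3), x = w * PresentedGroup.of i * w⁻¹}

namespace FC3aux


abbrev A := Fin 3

/-- all decompositions `l = p ++ a :: q`, as pairs `(p, q)`. -/
def splits (a : A) : List A → List (List A × List A)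
  | [] => []
  | b :: l =>
      (if b = a then [(([] : List A), l)] else []) ++
        (splits a l).map (fun pq => (b :: pq.1, pq.2))

lemma splits_len : ∀ {l : List A} {a : A} {pq : List A × List A},
    pq ∈ splits a l → pq.1.length + pq.2.length + 1 = l.length := by
  intro l
  induction l with
  | nil => intro a pq h; simp [splits] at h
  | cons b l ih =>
      intro a pq h
      simp only [splits, List.mem_append, List.mem_map] at h
      rcases h with h | ⟨x, hx, rfl⟩
      · rcases em (b = a) with hb | hb
        · simp [hb] at h; subst h; simp
        · simp [hb] at h
      · have := ih hx; simp; omega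

lemma mem_splits : ∀ {l : List A} {a : A} {p q : List A},
    (p, q) ∈ splits a l ↔ l = p ++ a :: q := by
  intro l
  induction l with
  | nil => intro a p q; simp [splits]
  | cons b l ih =>
      intro a p q
      simp only [splits, List.mem_append, List.mem_map]
      constructor
      · rintro (h | ⟨x, hx, heq⟩)
        · rcases em (b = a) with hb | hb
          · simp [hb] at h
            rcases h with ⟨rfl, rfl⟩; simp [hb]
          · simp [hb] at h
        · rcases x with ⟨p', q'⟩
          have := (ih (a := a) (p := p') (q := q')).mp hx
          cases heq
          simp [this]
      · intro h
        cases p with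
        | nil =>
            left
            simp at h
            rcases h with ⟨rfl, rfl⟩
            simp
        | cons c p' =>
            right
            simp at h
            rcases h with ⟨rfl, h⟩
            exact ⟨(p', q), (ih).mpr h, rfl⟩

/-- Maximal size of a noncrossing matching of equal letters. -/
def N : List A → ℕ
  | [] => 0
  | a :: l =>
      max (N l)
        (((splits a l).attach.map
          (fun x => N x.1.1 + N x.1.2 + 1)).foldr max 0)
termination_by l => l.length
decreasing_by
  all_goals simp only [List.length_cons]
  all_goals try have := splits_len x.2
  all_goals omega



lemma N_nil : N ([] : List A) = 0 := by rw [N]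

lemma N_cons (a : A) (l : List A) :
    N (a :: l) = max (N l)
      (((splits a l).attach.map (fun x => N x.1.1 + N x.1.2 + 1)).foldr max 0) := by
  rw [N]

lemma le_foldr_max {x : ℕ} {L : List ℕ} (h : x ∈ L) : x ≤ L.foldr max 0 := by
  induction L with
  | nil => simp at h
  | cons b L ih =>
      rcases List.mem_cons.mp h with rfl | h
      · exact le_max_left _ _
      · exact le_trans (ih h) (le_max_right _ _)

lemma foldr_max_cases (L : List ℕ) : L.foldr max 0 = 0 ∨ L.foldr max 0 ∈ L := by
  induction L with
  | nil => left; rfl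
  | cons b L ih =>
      rcases max_choice b (L.foldr max 0) with h | h
      · right; rw [List.foldr_cons, h]; exact List.mem_cons_self
      · rcases ih with h0 | hm
        · rw [List.foldr_cons, h, h0]; left; rfl
        · right; rw [List.foldr_cons, h]; exact List.mem_cons_of_mem _ hm

lemma N_ge_tail (a : A) (l : List A) : N l ≤ N (a :: l) := by
  rw [N_cons]; exact le_max_left _ _

lemma N_ge_split {a : A} {l p q : List A} (h : l = p ++ a :: q) :
    N p + N q + 1 ≤ N (a :: l) := by
  rw [N_cons]
  refine le_trans ?_ (le_max_right _ _)
  have hm : (p, q) ∈ splits a l := mem_splits.mpr h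
  exact le_foldr_max (List.mem_map.mpr ⟨⟨(p, q), hm⟩, List.mem_attach _ _, by simp⟩)

lemma N_cons_cases (a : A) (l : List A) :
    N (a :: l) = N l ∨
      ∃ p q, l = p ++ a :: q ∧ N (a :: l) = N p + N q + 1 := by
  rcases max_choice (N l)
      (((splits a l).attach.map (fun x => N x.1.1 + N x.1.2 + 1)).foldr max 0) with h | h
  · left; rw [N_cons, h]
  · rcases foldr_max_cases ((splits a l).attach.map (fun x => N x.1.1 + N x.1.2 + 1)) with
      h0 | hm
    · left
      rw [N_cons, h, h0]
      rw [h0] at h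
      omega
    · rcases List.mem_map.mp hm with ⟨⟨⟨p, q⟩, hpq⟩, _, hv⟩
      right
      exact ⟨p, q, mem_splits.mp hpq, by rw [N_cons, h, ← hv]⟩

lemma N_append : ∀ (u v : List A), N u + N v ≤ N (u ++ v) := by
  suffices H : ∀ (n : ℕ) (u v : List A), u.length ≤ n → N u + N v ≤ N (u ++ v) by
    intro u v; exact H u.length u v le_rfl
  intro n
  induction n with
  | zero =>
      intro u v hu
      have : u = [] := List.length_eq_zero_iff.mp (Nat.le_zero.mp hu)
      subst this; simp [N_nil]
  | succ n ih =>
      intro u v hu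
      cases u with
      | nil => simp [N_nil]
      | cons a t =>
          rcases N_cons_cases a t with h | ⟨p, q, rfl, h⟩
          · rw [h]
            calc N t + N v ≤ N (t ++ v) := ih t v (by simp at hu; omega)
              _ ≤ N (a :: (t ++ v)) := N_ge_tail _ _
              _ = N ((a :: t) ++ v) := rfl
          · rw [h]
            have hq : N q + N v ≤ N (q ++ v) := by
              refine ih q v ?_
              have := hu
              simp at this
              omega
            have : N p + N (q ++ v) + 1 ≤ N (a :: (p ++ a :: q ++ v)) := by
              refine N_ge_split ?_
              simp
            simp only [List.cons_append] at this ⊢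
            omega

lemma N_rot1 (a : A) (l : List A) : N (a :: l) ≤ N (l ++ [a]) := by
  rcases N_cons_cases a l with h | ⟨p, q, rfl, h⟩
  · rw [h]
    have := N_append l [a]
    omega
  · rw [h]
    have h1 : N q + N ([] : List A) + 1 ≤ N (a :: (q ++ [a])) := by
      refine N_ge_split ?_; simp
    have h2 : N p + N (a :: (q ++ [a])) ≤ N (p ++ a :: (q ++ [a])) := N_append _ _
    have h3 : p ++ a :: q ++ [a] = p ++ a :: (q ++ [a]) := by simp
    rw [h3]
    simp [N_nil] at h1
    omega

lemma N_rotate1_ge (l : List A) : N l ≤ N (l.rotate 1) := by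
  cases l with
  | nil => simp
  | cons a t =>
      rw [List.rotate_cons_succ, List.rotate_zero]
      exact N_rot1 a t

lemma N_rotate_eq (l : List A) : N (l.rotate 1) = N l := by
  have key : ∀ (k : ℕ) (w : List A), N w ≤ N (w.rotate k) := by
    intro k
    induction k with
    | zero => simp
    | succ k ih =>
        intro w
        have : w.rotate (k + 1) = (w.rotate 1).rotate k := by
          rw [List.rotate_rotate]; ring_nf
        rw [this]
        exact le_trans (N_rotate1_ge w) (ih _)
  refine le_antisymm ?_ (N_rotate1_ge l)
  cases l with
  | nil => simp
  | cons a t =>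
      have h1 : ((a :: t).rotate 1).rotate (a :: t).length.pred = (a :: t) := by
        rw [List.rotate_rotate]
        have : 1 + (a :: t).length.pred = (a :: t).length := by simp; omega
        rw [this, List.rotate_length]
      calc N ((a :: t).rotate 1) ≤ N (((a :: t).rotate 1).rotate (a :: t).length.pred) :=
            key _ _
        _ = N (a :: t) := by rw [h1]

lemma N_cons_rot (a : A) (l : List A) : N (a :: l) = N (l ++ [a]) := by
  have := N_rotate_eq (a :: l)
  rw [List.rotate_cons_succ, List.rotate_zero] at this
  omega


lemma N_insert_pair : ∀ (u v : List A) (x : A), N (u ++ x :: x :: v) ≤ N (u ++ v) + 1 := by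
  suffices H : ∀ (n : ℕ) (u v : List A) (x : A), u.length + v.length ≤ n →
      N (u ++ x :: x :: v) ≤ N (u ++ v) + 1 by
    intro u v x; exact H (u.length + v.length) u v x le_rfl
  intro n
  induction n using Nat.strong_induction_on with
  | _ n ih =>
    intro u v x hn
    cases u with
    | nil =>
        simp only [List.nil_append]
        rcases N_cons_cases x (x :: v) with h | ⟨p, q, hpq, h⟩
        · rcases N_cons_cases x v with h2 | ⟨v₁, v₂, hv, h2⟩
          · omega
          · subst hv
            have h3 : N v₁ + N (x :: v₂) ≤ N (v₁ ++ x :: v₂) := N_append v₁ (x :: v₂)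
            have h4 : N v₂ ≤ N (x :: v₂) := N_ge_tail x v₂
            omega
        · cases p with
          | nil =>
              have hq : v = q := by simpa using hpq
              subst hq
              have hN := N_nil
              omega
          | cons b p' =>
              obtain ⟨hxb, hv⟩ : x = b ∧ v = p' ++ x :: q := by simpa using hpq
              subst hxb
              subst hv
              have h3 : N (p' ++ [x]) + N q ≤ N ((p' ++ [x]) ++ q) := N_append _ _
              have h4 : (p' ++ [x]) ++ q = p' ++ x :: q := by simp
              rw [h4] at h3
              have h5 := N_cons_rot x p'
              omega
    | cons a u' =>
        simp only [List.cons_append]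
        rcases N_cons_cases a (u' ++ x :: x :: v) with h | ⟨p, q, hpq, h⟩
        · have h2 : N (u' ++ x :: x :: v) ≤ N (u' ++ v) + 1 := by
            refine ih (u'.length + v.length) (by simp at hn; omega) u' v x le_rfl
          have h3 := N_ge_tail a (u' ++ v)
          omega
        · rcases List.append_eq_append_iff.mp hpq with ⟨t, hp, hbv⟩ | ⟨t, hu', hq⟩
          · cases t with
            | nil =>
                simp only [List.append_nil] at hp
                subst hp
                obtain ⟨hxa, hq⟩ : x = a ∧ x :: v = q := by simpa using hbv
                subst hxa
                subst hq
                rcases N_cons_cases x v with h2 | ⟨v₁, v₂, hv, h2⟩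
                · have h3 := N_ge_tail x (p ++ v)
                  have h4 := N_append p v
                  omega
                · have hs : N (p ++ v₁) + N v₂ + 1 ≤ N (x :: (p ++ v)) :=
                    N_ge_split (by rw [hv]; simp)
                  have h4 := N_append p v₁
                  omega
            | cons b t' =>
                obtain ⟨hxb, hbv2⟩ : x = b ∧ x :: v = t' ++ a :: q := by simpa using hbv
                subst hxb
                cases t' with
                | nil =>
                    obtain ⟨hxa, hqv⟩ : x = a ∧ v = q := by simpa using hbv2
                    subst hxa
                    subst hqv
                    subst hp
                    have h3 : N (x :: u') + N v ≤ N ((x :: u') ++ v) := N_append _ _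
                    simp only [List.cons_append] at h3
                    have h5 := N_cons_rot x u'
                    omega
                | cons c t'' =>
                    obtain ⟨hxc, hv⟩ : x = c ∧ v = t'' ++ a :: q := by simpa using hbv2
                    subst hxc
                    subst hp
                    have hsz : u'.length + t''.length < n := by
                      simp [hv] at hn ⊢; omega
                    have hIH : N (u' ++ x :: x :: t'') ≤ N (u' ++ t'') + 1 :=
                      ih (u'.length + t''.length) hsz u' t'' x le_rfl
                    have hs : N (u' ++ t'') + N q + 1 ≤ N (a :: (u' ++ v)) :=
                      N_ge_split (by rw [hv]; simp)
                    omega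
          · cases t with
            | nil =>
                simp only [List.append_nil] at hu'
                subst hu'
                obtain ⟨hax, hq2⟩ : a = x ∧ q = x :: v := by simpa using hq
                subst hax
                subst hq2
                rcases N_cons_cases a v with h2 | ⟨v₁, v₂, hv, h2⟩
                · have h3 := N_ge_tail a (u' ++ v)
                  have h4 := N_append u' v
                  omega
                · have hs : N (u' ++ v₁) + N v₂ + 1 ≤ N (a :: (u' ++ v)) :=
                    N_ge_split (by rw [hv]; simp)
                  have h4 := N_append u' v₁
                  omega
            | cons b t' =>
                obtain ⟨hab, hq2⟩ : a = b ∧ q = t' ++ x :: x :: v := by simpa using hq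
                subst hab
                subst hq2
                subst hu'
                have hsz : t'.length + v.length < n := by
                  simp at hn; omega
                have hIH : N (t' ++ x :: x :: v) ≤ N (t' ++ v) + 1 :=
                  ih (t'.length + v.length) hsz t' v x le_rfl
                have hs : N p + N (t' ++ v) + 1 ≤ N (a :: ((p ++ a :: t') ++ v)) :=
                  N_ge_split (by simp)
                omega


def ltr (k : ℕ) : A := (k : ZMod 3)

lemma ltr_eq_iff {j k : ℕ} : ltr j = ltr k ↔ j ≡ k [MOD 3] := by
  unfold ltr
  exact ZMod.natCast_eq_natCast_iff j k 3

lemma ltr_eq_iff' {j k : ℕ} : ltr j = ltr k ↔ j % 3 = k % 3 := ltr_eq_iff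

def sg (r m : ℕ) : List A := (List.range m).map (fun i => ltr (r + i))

lemma sg_length (r m : ℕ) : (sg r m).length = m := by simp [sg]

lemma sg_zero (r : ℕ) : sg r 0 = [] := rfl

lemma sg_succ (r m : ℕ) : sg r (m + 1) = ltr r :: sg (r + 1) m := by
  unfold sg
  rw [List.range_succ_eq_map, List.map_cons, List.map_map]
  congr 1
  refine List.map_congr_left ?_
  intro i _
  simp only [Function.comp_apply]
  congr 1
  omega

lemma sg_last (r m : ℕ) : sg r (m + 1) = sg r m ++ [ltr (r + m)] := by
  unfold sg
  rw [List.range_succ]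
  simp

lemma sg_append (r m k : ℕ) : sg r (m + k) = sg r m ++ sg (r + m) k := by
  unfold sg
  rw [List.range_add, List.map_append, List.map_map]
  congr 1
  refine List.map_congr_left ?_
  intro i _
  simp only [Function.comp_apply]
  congr 1
  omega

lemma sg_decomp {r m : ℕ} {p q : List A} {x : A} (h : sg r m = p ++ x :: q) :
    p = sg r p.length ∧ x = ltr (r + p.length) ∧
      q = sg (r + p.length + 1) (m - p.length - 1) ∧ p.length + 1 + q.length = m := by
  have hlen : p.length + 1 + q.length = m := by
    have := congrArg List.length h
    simp [sg_length] at this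
    omega
  have h2 : sg r m = sg r p.length ++ sg (r + p.length) (m - p.length) := by
    rw [← sg_append]
    congr 1
    omega
  set k := m - p.length - 1 with hk
  have h3 : sg (r + p.length) (m - p.length) =
      ltr (r + p.length) :: sg (r + p.length + 1) k := by
    have hm : m - p.length = k + 1 := by omega
    rw [hm, sg_succ]
  rw [h2, h3] at h
  obtain ⟨hp, hxq⟩ := List.append_inj h.symm (by simp [sg_length])
  injection hxq with h1 h2
  exact ⟨hp, h1, h2, hlen⟩

lemma N_sg_le : ∀ (m r : ℕ), 3 * N (sg r m) ≤ m - 1 := by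
  intro m
  induction m using Nat.strong_induction_on with
  | _ m ih =>
    intro r
    cases m with
    | zero => simp [sg_zero, N_nil]
    | succ m =>
        rw [sg_succ]
        rcases N_cons_cases (ltr r) (sg (r + 1) m) with h | ⟨p, q, hpq, h⟩
        · have := ih m (by omega) (r + 1)
          omega
        · obtain ⟨hp, hx, hq, hlen⟩ := sg_decomp hpq
          have hdvd : (r + 1 + p.length) % 3 = r % 3 := ltr_eq_iff'.mp hx.symm
          have hNp : 3 * N p ≤ p.length - 1 := by
            have := ih p.length (by omega) (r + 1)
            rw [← hp] at this
            simpa [sg_length] using this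
          have hNq : 3 * N q ≤ (m - p.length - 1) - 1 := by
            have := ih (m - p.length - 1) (by omega) (r + 1 + p.length + 1)
            rw [← hq] at this
            simpa [sg_length] using this
          omega

lemma N_sg_ge : ∀ (k : ℕ), (∀ r, k ≤ N (sg r (3 * k + 2))) ∧ (∀ r, k ≤ N (sg r (3 * k + 1))) := by
  intro k
  induction k with
  | zero => exact ⟨fun r => Nat.zero_le _, fun r => Nat.zero_le _⟩
  | succ k ih =>
      obtain ⟨ih1, ih2⟩ := ih
      constructor
      · intro r
        have e1 : 3 * (k + 1) + 2 = (3 * k + 4) + 1 := by ring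
        rw [e1, sg_succ]
        have e2 : sg (r + 1) (3 * k + 4) = sg (r + 1) 2 ++ sg (r + 1 + 2) (3 * k + 2) := by
          have h24 : 3 * k + 4 = 2 + (3 * k + 2) := by ring
          rw [h24, sg_append]
        have e3 : sg (r + 1 + 2) (3 * k + 2) =
            ltr (r + 1 + 2) :: sg (r + 1 + 2 + 1) (3 * k + 1) := by
          have h32 : 3 * k + 2 = (3 * k + 1) + 1 := by ring
          rw [h32, sg_succ]
        have hl : ltr (r + 1 + 2) = ltr r := ltr_eq_iff'.mpr (by omega)
        have hsplit : sg (r + 1) (3 * k + 4) =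
            sg (r + 1) 2 ++ ltr r :: sg (r + 1 + 2 + 1) (3 * k + 1) := by
          rw [e2, e3, hl]
        have hge := N_ge_split hsplit
        have := ih2 (r + 1 + 2 + 1)
        omega
      · intro r
        have e1 : 3 * (k + 1) + 1 = (3 * k + 3) + 1 := by ring
        rw [e1, sg_succ]
        have e2 : sg (r + 1) (3 * k + 3) =
            sg (r + 1) (3 * k + 2) ++ [ltr (r + 1 + (3 * k + 2))] := by
          have h32 : 3 * k + 3 = (3 * k + 2) + 1 := by ring
          rw [h32, sg_last]
        have hl : ltr (r + 1 + (3 * k + 2)) = ltr r := ltr_eq_iff'.mpr (by omega)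
        have hsplit : sg (r + 1) (3 * k + 3) = sg (r + 1) (3 * k + 2) ++ ltr r :: [] := by
          rw [e2, hl]
        have hge := N_ge_split hsplit
        have := ih1 (r + 1)
        have := N_nil
        omega

lemma N_sg_upper {n : ℕ} (hn : 1 ≤ n) : N (sg 0 (3 * n)) ≤ n - 1 := by
  have := N_sg_le (3 * n) 0
  omega

lemma N_sg_lower {n : ℕ} (hn : 1 ≤ n) : n - 1 ≤ N (sg 0 (3 * n)) := by
  have e1 : 3 * n = (3 * (n - 1) + 2) + 1 := by omega
  rw [e1, sg_last]
  have h1 := (N_sg_ge (n - 1)).1 0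
  have h2 := N_append (sg 0 (3 * (n - 1) + 2)) [ltr (0 + (3 * (n - 1) + 2))]
  omega

lemma sg_chain : ∀ (m r : ℕ), (sg r m).Chain' (· ≠ ·) := by
  intro m
  induction m with
  | zero => intro r; exact List.isChain_nil
  | succ m ih =>
      intro r
      rw [sg_succ]
      refine List.isChain_cons.mpr ⟨?_, ih (r + 1)⟩
      intro y hy
      cases m with
      | zero => simp [sg_zero] at hy
      | succ m =>
          rw [sg_succ] at hy
          simp at hy
          subst hy
          intro hc
          have := ltr_eq_iff'.mp hc
          omega


/-- Deletion of one adjacent equal pair. -/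
def StepD (w w' : List A) : Prop :=
  ∃ (u v : List A) (x : A), w = u ++ x :: x :: v ∧ w' = u ++ v

lemma StepD_cons {w w' : List A} (a : A) (h : StepD w w') : StepD (a :: w) (a :: w') := by
  obtain ⟨u, v, x, rfl, rfl⟩ := h
  exact ⟨a :: u, v, x, rfl, rfl⟩

/-- Multi-step reduction. -/
def Red : List A → List A → Prop := Relation.ReflTransGen StepD

lemma Red_cons {w w' : List A} (a : A) (h : Red w w') : Red (a :: w) (a :: w') :=
  Relation.ReflTransGen.lift (List.cons a) (fun _ _ hs => StepD_cons a hs) _ _ h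

/-- The reduced form of a word. -/
def reduce : List A → List A
  | [] => []
  | a :: l =>
      let t := reduce l
      if t.head? = some a then t.tail else a :: t

lemma reduce_chain : ∀ (l : List A), (reduce l).Chain' (· ≠ ·) := by
  intro l
  induction l with
  | nil => exact List.isChain_nil
  | cons a l ih =>
      rw [reduce]
      by_cases h : (reduce l).head? = some a
      · simp only [h, if_pos]
        exact ih.tail
      · simp only [h, if_neg, if_false]
        refine List.isChain_cons.mpr ⟨?_, ih⟩
        intro y hy
        intro hc
        subst hc
        exact h hy

lemma red_reduce : ∀ (l : List A), Red l (reduce l) := by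
  intro l
  induction l with
  | nil => exact Relation.ReflTransGen.refl
  | cons a l ih =>
      have h1 : Red (a :: l) (a :: reduce l) := Red_cons a ih
      rw [reduce]
      by_cases h : (reduce l).head? = some a
      · simp only [h, if_pos]
        refine h1.trans (Relation.ReflTransGen.single ?_)
        obtain ⟨t, ht⟩ : ∃ t, reduce l = a :: t := by
          cases hr : reduce l with
          | nil => rw [hr] at h; simp at h
          | cons b t => rw [hr] at h; simp at h; exact ⟨t, by rw [h]⟩
        rw [ht]
        exact ⟨[], t, a, rfl, rfl⟩
      · simp only [h, if_neg, if_false]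
        exact h1

lemma F_step {w w' : List A} (h : StepD w w') :
    w'.length + 2 * N w ≤ w.length + 2 * N w' := by
  obtain ⟨u, v, x, rfl, rfl⟩ := h
  have := N_insert_pair u v x
  simp only [List.length_append, List.length_cons]
  omega

lemma F_red {w w' : List A} (h : Red w w') :
    w'.length + 2 * N w ≤ w.length + 2 * N w' := by
  induction h with
  | refl => omega
  | tail _ hstep ih =>
      have := F_step hstep
      omega

lemma N_palin : ∀ (u : List A) (i : A), u.length ≤ N (u ++ i :: u.reverse) := by
  intro u
  induction u with
  | nil => intro i; simp
  | cons x z ih =>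
      intro i
      have he : (x :: z) ++ i :: (x :: z).reverse = x :: ((z ++ i :: z.reverse) ++ x :: []) := by
        simp
      rw [he]
      have h1 : N (z ++ i :: z.reverse) + N ([] : List A) + 1 ≤
          N (x :: ((z ++ i :: z.reverse) ++ x :: [])) := N_ge_split rfl
      have h2 := ih i
      have h3 := N_nil
      simp only [List.length_cons]
      omega



abbrev W := FreeCoxeter3

/-- product of the generators indexed by a word -/
def pi (l : List A) : W := (l.map (fun i => (PresentedGroup.of i : W))).prod

lemma of_mul_self (i : A) : (PresentedGroup.of i : W) * PresentedGroup.of i = 1 := by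
  have h : FreeGroup.of i * FreeGroup.of i ∈ Subgroup.normalClosure triRels :=
    Subgroup.subset_normalClosure ⟨i, rfl⟩
  have h2 : (PresentedGroup.of i : W) * PresentedGroup.of i
      = PresentedGroup.mk triRels (FreeGroup.of i * FreeGroup.of i) := by
    rw [map_mul]; rfl
  rw [h2]
  exact (QuotientGroup.eq_one_iff _).mpr h

lemma of_inv (i : A) : (PresentedGroup.of i : W)⁻¹ = PresentedGroup.of i :=
  inv_eq_of_mul_eq_one_right (of_mul_self i)

lemma pi_nil : pi [] = 1 := rfl

lemma pi_cons (a : A) (l : List A) : pi (a :: l) = PresentedGroup.of a * pi l := by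
  simp [pi]

lemma pi_append (u v : List A) : pi (u ++ v) = pi u * pi v := by
  simp [pi]

lemma pi_reverse (l : List A) : pi l.reverse = (pi l)⁻¹ := by
  induction l with
  | nil => simp [pi_nil]
  | cons a l ih =>
      rw [List.reverse_cons, pi_append, pi_cons, ih, pi_cons]
      simp [pi_nil, mul_inv_rev, of_inv]

lemma pi_surj : ∀ g : W, ∃ l : List A, pi l = g := by
  intro g
  induction g using PresentedGroup.induction_on with
  | _ z =>
    refine FreeGroup.induction_on z ⟨[], by simp [pi_nil, map_one]⟩
      (fun x => ⟨[x], by simp [pi_cons, pi_nil]; rfl⟩) (fun x ih => ?_) (fun x y ihx ihy => ?_)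
    · obtain ⟨l, hl⟩ := ih
      exact ⟨l.reverse, by rw [pi_reverse, hl, map_inv]⟩
    · obtain ⟨l, hl⟩ := ihx
      obtain ⟨l', hl'⟩ := ihy
      exact ⟨l ++ l', by rw [pi_append, hl, hl', map_mul]⟩

lemma pi_step {w w' : List A} (h : StepD w w') : pi w = pi w' := by
  obtain ⟨u, v, x, rfl, rfl⟩ := h
  rw [pi_append, pi_append, pi_cons, pi_cons, ← mul_assoc, ← mul_assoc,
    mul_assoc (pi u), of_mul_self, mul_one]

lemma pi_red {w w' : List A} (h : Red w w') : pi w = pi w' := by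
  induction h with
  | refl => rfl
  | tail _ hstep ih => rw [ih, pi_step hstep]

/-- reduced words -/
def RW := {l : List A // l.Chain' (· ≠ ·)}

def tfun (a : A) : RW → RW := fun w =>
  if h : w.1.head? = some a then ⟨w.1.tail, w.2.tail⟩
  else ⟨a :: w.1, List.isChain_cons.mpr
    ⟨fun y hy hay => h (by rw [← hay] at hy; exact hy), w.2⟩⟩

lemma tfun_invol (a : A) : Function.Involutive (tfun a) := by
  rintro ⟨l, hl⟩
  by_cases h : l.head? = some a
  · obtain ⟨t, rfl⟩ : ∃ t, l = a :: t := by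
      cases l with
      | nil => simp at h
      | cons b t => simp at h; exact ⟨t, by rw [h]⟩
    have h2 : t.head? ≠ some a := by
      intro hc
      exact (List.isChain_cons.mp hl).1 a hc rfl
    unfold tfun
    split_ifs with h4 h5 <;> simp_all <;> rfl
  · unfold tfun
    have h3 : (a :: l).head? = some a := rfl
    split_ifs with h4 <;> simp_all <;> rfl

def sig (a : A) : Equiv.Perm RW := (tfun_invol a).toPerm _

lemma lift_rels : ∀ r ∈ triRels, FreeGroup.lift (fun a => sig a) r = 1 := by
  rintro r ⟨i, rfl⟩
  rw [map_mul, FreeGroup.lift_apply_of]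
  ext w
  exact tfun_invol i w

def Phi : W →* Equiv.Perm RW := PresentedGroup.toGroup lift_rels

lemma Phi_of (a : A) : Phi (PresentedGroup.of a) = sig a := PresentedGroup.toGroup.of lift_rels

def emptyRW : RW := ⟨[], List.isChain_nil⟩

lemma Phi_pi : ∀ (l : List A) (h : l.Chain' (· ≠ ·)), Phi (pi l) emptyRW = ⟨l, h⟩ := by
  intro l
  induction l with
  | nil =>
      intro h
      rw [pi_nil, map_one]
      rfl
  | cons a l ih =>
      intro h
      rw [pi_cons, map_mul, Phi_of]
      have htail : l.Chain' (· ≠ ·) := h.tail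
      rw [Equiv.Perm.mul_apply, ih htail]
      have hhead : l.head? ≠ some a := by
        intro hc
        exact (List.isChain_cons.mp h).1 a hc rfl
      show tfun a ⟨l, htail⟩ = ⟨a :: l, h⟩
      exact dif_neg hhead

lemma reduced_unique {l l' : List A} (hl : l.Chain' (· ≠ ·)) (hl' : l'.Chain' (· ≠ ·))
    (h : pi l = pi l') : l = l' := by
  have h1 := Phi_pi l hl
  have h2 := Phi_pi l' hl'
  rw [h, h2] at h1
  exact (congrArg Subtype.val h1).symm

lemma conj_prod : ∀ (L : List W) (x : W), (L.map fun g => x * g * x⁻¹).prod = x * L.prod * x⁻¹ := by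
  intro L x
  induction L with
  | nil => simp
  | cons g L ih =>
      simp only [List.map_cons, List.prod_cons, ih]
      group

lemma of_mem_triR (a : A) : (PresentedGroup.of a : W) ∈ triR := by
  refine ⟨1, a, ?_⟩
  simp

lemma exists_factorization : ∀ (w : List A), ∃ L : List W,
    (∀ r ∈ L, r ∈ triR) ∧ L.prod = pi w ∧ L.length + 2 * N w = w.length := by
  suffices H : ∀ (n : ℕ) (w : List A), w.length ≤ n → ∃ L : List W,
      (∀ r ∈ L, r ∈ triR) ∧ L.prod = pi w ∧ L.length + 2 * N w = w.length by
    intro w; exact H w.length w le_rfl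
  intro n
  induction n using Nat.strong_induction_on with
  | _ n ih =>
    intro w hw
    cases w with
    | nil => exact ⟨[], by simp, by simp [pi_nil], by simp [N_nil]⟩
    | cons a l =>
        rcases N_cons_cases a l with h | ⟨p, q, hpq, h⟩
        · obtain ⟨L, hmem, hprod, hlen⟩ := ih l.length (by simp at hw; omega) l le_rfl
          refine ⟨PresentedGroup.of a :: L, ?_, ?_, ?_⟩
          · intro r hr
            rcases List.mem_cons.mp hr with rfl | hr
            · exact of_mem_triR a
            · exact hmem r hr
          · rw [List.prod_cons, hprod, pi_cons]
          · simp only [List.length_cons, h]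
            omega
        · subst hpq
          obtain ⟨Lp, hpmem, hpprod, hplen⟩ := ih p.length
            (by simp at hw; omega) p le_rfl
          obtain ⟨Lq, hqmem, hqprod, hqlen⟩ := ih q.length
            (by simp at hw; omega) q le_rfl
          refine ⟨(Lp.map fun g => PresentedGroup.of a * g * (PresentedGroup.of a)⁻¹) ++ Lq,
            ?_, ?_, ?_⟩
          · intro r hr
            rcases List.mem_append.mp hr with hr | hr
            · obtain ⟨g, hg, rfl⟩ := List.mem_map.mp hr
              obtain ⟨w0, i, rfl⟩ := hpmem g hg
              refine ⟨PresentedGroup.of a * w0, i, ?_⟩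
              group
            · exact hqmem r hr
          · rw [List.prod_append, conj_prod, hpprod, hqprod, of_inv]
            rw [pi_cons, pi_append, pi_cons]
            group
          · simp only [List.length_append, List.length_map, List.length_cons, h]
            omega

lemma refl_word {r : W} (hr : r ∈ triR) :
    ∃ w : List A, pi w = r ∧ w.length ≤ 2 * N w + 1 := by
  obtain ⟨g, i, rfl⟩ := hr
  obtain ⟨u, rfl⟩ := pi_surj g
  refine ⟨u ++ i :: u.reverse, ?_, ?_⟩
  · rw [pi_append, pi_cons, pi_reverse, mul_assoc]
  · have := N_palin u i
    simp only [List.length_append, List.length_cons, List.length_reverse]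
    omega

lemma prod_word : ∀ (L : List W), (∀ r ∈ L, r ∈ triR) →
    ∃ w : List A, pi w = L.prod ∧ w.length ≤ L.length + 2 * N w := by
  intro L
  induction L with
  | nil => exact fun _ => ⟨[], by simp [pi_nil], by simp⟩
  | cons r L ih =>
      intro hmem
      obtain ⟨wr, hwr, hlr⟩ := refl_word (hmem r List.mem_cons_self)
      obtain ⟨w', h1, h2⟩ := ih (fun s hs => hmem s (List.mem_cons_of_mem _ hs))
      refine ⟨wr ++ w', ?_, ?_⟩
      · rw [pi_append, hwr, h1, List.prod_cons]
      · have := N_append wr w'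
        simp only [List.length_append, List.length_cons]
        omega

lemma sg_three (m : ℕ) : sg 3 m = sg 0 m := by
  unfold sg
  refine List.map_congr_left ?_
  intro i _
  exact ltr_eq_iff'.mpr (by omega)

lemma pi_sg_pow : ∀ n : ℕ, pi (sg 0 (3 * n)) =
    (PresentedGroup.of (0 : Fin 3) * PresentedGroup.of 1 * PresentedGroup.of 2 : W) ^ n := by
  intro n
  induction n with
  | zero => simp [sg_zero, pi_nil]
  | succ n ih =>
      have h3 : 3 * (n + 1) = 3 + 3 * n := by ring
      rw [h3, sg_append, sg_three, pi_append, ih]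
      have habc : pi (sg 0 3) =
          (PresentedGroup.of (0 : Fin 3) * PresentedGroup.of 1 * PresentedGroup.of 2 : W) := by
        have hsg : sg 0 3 = [(0 : Fin 3), 1, 2] := by decide
        rw [hsg, pi_cons, pi_cons, pi_cons, pi_nil]
        group
      rw [habc, pow_succ']

end FC3aux


theorem free_coxeter_reflection_length_abc_pow (n : ℕ) (hn : 1 ≤ n) :
    wordLength triR
      ((PresentedGroup.of (0 : Fin 3) * PresentedGroup.of 1 * PresentedGroup.of 2 :
        FreeCoxeter3) ^ n) = ((n + 2 : ℕ) : ℕ∞) := by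
  classical
  have hNsg_le := FC3aux.N_sg_upper hn
  have hNsg_ge := FC3aux.N_sg_lower hn
  have hlen_sg : (FC3aux.sg 0 (3 * n)).length = 3 * n := FC3aux.sg_length 0 (3 * n)
  have lower : ∀ (l : List FreeCoxeter3), (∀ r ∈ l, r ∈ triR) →
      l.prod = (PresentedGroup.of (0 : Fin 3) * PresentedGroup.of 1 * PresentedGroup.of 2 :
        FreeCoxeter3) ^ n → n + 2 ≤ l.length := by
    intro l hmem hprod
    obtain ⟨w, hw, hwl⟩ := FC3aux.prod_word l hmem
    have hred := FC3aux.F_red (FC3aux.red_reduce w)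
    have hpi : FC3aux.pi (FC3aux.reduce w) = FC3aux.pi (FC3aux.sg 0 (3 * n)) := by
      rw [← FC3aux.pi_red (FC3aux.red_reduce w), hw, hprod, FC3aux.pi_sg_pow n]
    have huniq := FC3aux.reduced_unique (FC3aux.reduce_chain w)
      (FC3aux.sg_chain (3 * n) 0) hpi
    rw [huniq, hlen_sg] at hred
    omega
  unfold wordLength
  apply le_antisymm
  · obtain ⟨L, hmem, hprod, hlen⟩ := FC3aux.exists_factorization (FC3aux.sg 0 (3 * n))
    have hL : L.length = n + 2 := by
      rw [hlen_sg] at hlen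
      omega
    apply sInf_le
    exact ⟨L, hmem, by rw [hprod, FC3aux.pi_sg_pow n], by rw [hL]⟩
  · apply le_sInf
    rintro b ⟨l, hmem, hprod, hblen⟩
    rw [← hblen]
    exact_mod_cast lower l hmem hprod

end
end

section
/- Let W = ℤ/2 * ℤ/2 * ℤ/2 be the free product of three groups of order two, with standard generators a, b, c, and let R be the set of conjugates of the generators. Then the reflection length function ℓ_R on W is unbounded: for every N there exists w ∈ W with ℓ_R(w) > N. -/
noncomputable section

namespace RedModel

/-- Push a letter onto the front of a reduced word, cancelling if possible. -/
def push (x : Fin 3) : List (Fin 3) → List (Fin 3)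
  | [] => [x]
  | y :: t => if x = y then t else x :: y :: t

/-- `F v u` is the reduced product of the words `u` then `v`. -/
def F (v u : List (Fin 3)) : List (Fin 3) := u.foldr push v

abbrev Reduced (l : List (Fin 3)) : Prop := l.Chain' (· ≠ ·)

lemma push_reduced {x : Fin 3} {l : List (Fin 3)} (h : Reduced l) : Reduced (push x l) := by
  cases l with
  | nil => simp [push, Reduced, List.Chain']
  | cons y t =>
    by_cases hxy : x = y
    · simpa [push, hxy, List.Chain'] using (h.tail : Reduced t)
    · simp only [push, if_neg hxy]
      exact List.isChain_cons_cons.mpr ⟨hxy, h⟩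

lemma F_reduced {v u : List (Fin 3)} (hv : Reduced v) (hu : Reduced u) : Reduced (F v u) := by
  induction u with
  | nil => exact hv
  | cons x t ih =>
    have ht : Reduced t := hu.tail
    exact push_reduced (ih ht)

lemma push_push {x : Fin 3} {l : List (Fin 3)} (h : Reduced l) : push x (push x l) = l := by
  cases l with
  | nil => simp [push]
  | cons y t =>
    by_cases hxy : x = y
    · subst hxy
      cases t with
      | nil => simp [push]
      | cons z t' =>
        have hxz : x ≠ z := (List.isChain_cons_cons.mp h).1
        simp [push, hxz]
    · simp [push, hxy]

lemma F_push (x : Fin 3) {L w : List (Fin 3)} (hL : Reduced L) (hw : Reduced w) :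
    F w (push x L) = push x (F w L) := by
  cases L with
  | nil => rfl
  | cons y t =>
    have ht : Reduced t := hL.tail
    by_cases hxy : x = y
    · subst hxy
      have h1 : push x (x :: t) = t := by simp [push]
      rw [h1]
      show F w t = push x (push x (F w t))
      exact (push_push (F_reduced hw ht)).symm
    · simp only [push, if_neg hxy]
      rfl

lemma F_assoc {u v w : List (Fin 3)} (hu : Reduced u) (hv : Reduced v) (hw : Reduced w) :
    F w (F v u) = F (F w v) u := by
  induction u with
  | nil => rfl
  | cons x t ih =>
    have ht : Reduced t := hu.tail
    show F w (push x (F v t)) = push x (F (F w v) t)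
    rw [F_push x (F_reduced hv ht) hw, ih ht]

lemma F_nil_right {u : List (Fin 3)} (hu : Reduced u) : F [] u = u := by
  induction u with
  | nil => rfl
  | cons x t ih =>
    have ht : Reduced t := hu.tail
    show push x (F [] t) = x :: t
    rw [ih ht]
    cases t with
    | nil => rfl
    | cons y t' =>
      have hxy : x ≠ y := (List.isChain_cons_cons.mp hu).1
      simp [push, hxy]

lemma F_reverse_self {u : List (Fin 3)} (hu : Reduced u) : F u u.reverse = [] := by
  induction u with
  | nil => rfl
  | cons x t ih =>
    have ht : Reduced t := hu.tail
    have step : F (x :: t) (List.reverse t ++ [x]) = F t t.reverse := by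
      show List.foldr push (x :: t) (t.reverse ++ [x]) = _
      rw [List.foldr_append]
      show F (push x (x :: t)) t.reverse = F t t.reverse
      simp [push]
    simpa [step] using ih ht

/-- The group of reduced words over three involutive letters. -/
def Red : Type := {l : List (Fin 3) // Reduced l}

instance : Mul Red := ⟨fun a b => ⟨F b.1 a.1, F_reduced b.2 a.2⟩⟩
instance : One Red := ⟨⟨[], List.isChain_nil⟩⟩
instance : Inv Red := ⟨fun a => ⟨a.1.reverse,
  (List.isChain_reverse (l := a.1)).mpr (a.2.imp fun _ _ h => Ne.symm h)⟩⟩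

@[simp] lemma mul_val (a b : Red) : (a * b).1 = F b.1 a.1 := rfl
@[simp] lemma inv_val (a : Red) : (a⁻¹).1 = a.1.reverse := rfl
@[simp] lemma one_val : (1 : Red).1 = [] := rfl

instance : Group Red where
  mul_assoc a b c := by
    apply Subtype.ext
    show F c.1 ((a * b).1) = F ((b * c).1) a.1
    rw [mul_val, mul_val]
    exact F_assoc a.2 b.2 c.2
  one_mul a := Subtype.ext rfl
  mul_one a := Subtype.ext (F_nil_right a.2)
  inv_mul_cancel a := Subtype.ext (F_reverse_self a.2)

/-- Concatenation without cancellation. -/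
lemma F_of_reduced_append : ∀ (u : List (Fin 3)) (v : List (Fin 3)),
    Reduced (u ++ v) → F v u = u ++ v := by
  intro u
  induction u with
  | nil => intro v _; rfl
  | cons x t ih =>
    intro v h
    have htv : Reduced (t ++ v) := by
      have : Reduced (x :: (t ++ v)) := by simpa using h
      exact this.tail
    show push x (F v t) = x :: t ++ v
    rw [ih v htv]
    rcases he : t ++ v with _ | ⟨z, rest⟩
    · obtain ⟨rfl, rfl⟩ := List.append_eq_nil_iff.mp he
      simp [push]
    · have hxz : x ≠ z := by
        have hh : Reduced (x :: (t ++ v)) := by simpa using h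
        rw [he] at hh
        exact (List.isChain_cons_cons.mp hh).1
      simp [push, hxz, he]

/-- Structure of multiplication: a common part cancels, the rest concatenates. -/
lemma F_decomp : ∀ (u : List (Fin 3)), Reduced u → ∀ (v : List (Fin 3)), Reduced v →
    ∃ w u₁ v₁, u = u₁ ++ w.reverse ∧ v = w ++ v₁ ∧ F v u = u₁ ++ v₁ ∧ Reduced (u₁ ++ v₁) := by
  intro u
  induction u using List.reverseRecOn with
  | nil =>
    intro _ v hv
    exact ⟨[], [], v, by simp, by simp, rfl, hv⟩
  | append_singleton u' x ih =>
    intro hu v hv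
    have hu' : Reduced u' := (List.isChain_append.mp hu).1
    have hlast : ∀ p ∈ u'.getLast?, p ≠ x := by
      intro p hp
      exact (List.isChain_append.mp hu).2.2 p hp x (by simp)
    have hF : ∀ v₀ : List (Fin 3), F v₀ (u' ++ [x]) = F (push x v₀) u' := by
      intro v₀
      show List.foldr push v₀ (u' ++ [x]) = _
      rw [List.foldr_append]
      rfl
    -- whether the first letter of v is x
    by_cases hcase : v.head? = some x
    · -- cancellation case
      obtain ⟨v', rfl⟩ : ∃ v', v = x :: v' := by
        cases v with
        | nil => simp at hcase
        | cons y v' =>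
          have hyx : y = x := by simpa using hcase
          exact ⟨v', by rw [hyx]⟩
      have hv' : Reduced v' := hv.tail
      obtain ⟨w, u₁, v₁, h1, h2, h3, h4⟩ := ih hu' v' hv'
      refine ⟨x :: w, u₁, v₁, ?_, ?_, ?_, h4⟩
      · rw [List.reverse_cons, ← List.append_assoc, ← h1]
      · rw [h2]; rfl
      · rw [hF]
        have hpush : push x (x :: v') = v' := by simp [push]
        rw [hpush, h3]
    · -- no cancellation
      have hpush : push x v = x :: v := by
        cases v with
        | nil => rfl
        | cons y v' =>
          have : x ≠ y := fun h => hcase (by simp [h])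
          simp [push, this]
      have hred : Reduced (u' ++ (x :: v)) := by
        refine List.isChain_append.mpr ⟨hu', ?_, ?_⟩
        · cases v with
          | nil => simp [Reduced]
          | cons y v' =>
            have hxy : x ≠ y := fun h => hcase (by simp [h])
            exact List.isChain_cons_cons.mpr ⟨hxy, hv⟩
        · intro p hp q hq
          simp at hq
          subst hq
          exact hlast p hp
      refine ⟨[], u' ++ [x], v, by simp, by simp, ?_, by simpa using hred⟩
      rw [hF, hpush, F_of_reduced_append u' (x :: v) hred, List.append_assoc]
      rfl

/-! ### The counting quasimorphism -/

/-- The sign of an adjacent pair. -/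
def ε (a b : Fin 3) : ℤ := if b = a + 1 then 1 else if a = b + 1 then -1 else 0

lemma eps_abs : ∀ a b : Fin 3, |ε a b| ≤ 1 := by decide

lemma eps_antisymm : ∀ a b : Fin 3, ε b a = - ε a b := by decide

/-- Signed count of adjacent pairs in a word. -/
def f : List (Fin 3) → ℤ
  | [] => 0
  | [_] => 0
  | x :: y :: t => ε x y + f (y :: t)

/-- Junction term. -/
def j (p q : List (Fin 3)) : ℤ :=
  match p.getLast?, q.head? with
  | some a, some b => ε a b
  | _, _ => 0

lemma j_abs (p q : List (Fin 3)) : |j p q| ≤ 1 := by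
  unfold j
  rcases p.getLast? with _ | a <;> rcases q.head? with _ | b <;> simp [eps_abs]

lemma f_append : ∀ (p q : List (Fin 3)), f (p ++ q) = f p + f q + j p q := by
  intro p
  induction p with
  | nil => intro q; simp [f, j]
  | cons x t ih =>
    intro q
    cases t with
    | nil =>
      cases q with
      | nil => simp [f, j]
      | cons y s =>
        show f (x :: y :: s) = f [x] + f (y :: s) + j [x] (y :: s)
        rw [show f (x :: y :: s) = ε x y + f (y :: s) from rfl]
        rw [show f [x] = 0 from rfl]
        rw [show j [x] (y :: s) = ε x y from rfl]
        ring
    | cons y t' =>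
      show f (x :: y :: (t' ++ q)) = f (x :: y :: t') + f q + j (x :: y :: t') q
      rw [show f (x :: y :: (t' ++ q)) = ε x y + f (y :: (t' ++ q)) from rfl]
      rw [show (y :: (t' ++ q)) = (y :: t') ++ q from rfl, ih q]
      rw [show f (x :: y :: t') = ε x y + f (y :: t') from rfl]
      have hj : j (x :: y :: t') q = j (y :: t') q := by
        unfold j
        rw [List.getLast?_cons_cons]
      rw [hj]; ring

lemma f_reverse : ∀ l : List (Fin 3), f l.reverse = - f l := by
  intro l
  induction l with
  | nil => simp [f]
  | cons x t ih =>
    rw [List.reverse_cons, f_append, ih]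
    rw [show (x :: t) = [x] ++ t from rfl, f_append]
    have hj : j t.reverse [x] = - j [x] t := by
      unfold j
      rw [List.getLast?_reverse]
      rcases t.head? with _ | y
      · simp
      · simpa using eps_antisymm x y
    rw [hj]
    rw [show f [x] = 0 from rfl]
    ring

/-- The quasimorphism property. -/
lemma f_F_bound {u v : List (Fin 3)} (hu : Reduced u) (hv : Reduced v) :
    |f (F v u) - f u - f v| ≤ 3 := by
  obtain ⟨w, u₁, v₁, h1, h2, h3, _⟩ := F_decomp u hu v hv
  have e1 : f u = f u₁ - f w + j u₁ w.reverse := by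
    rw [h1, f_append, f_reverse]; ring
  have e2 : f v = f w + f v₁ + j w v₁ := by rw [h2, f_append]
  have e3 : f (F v u) = f u₁ + f v₁ + j u₁ v₁ := by rw [h3, f_append]
  rw [e1, e2, e3]
  have b1 := abs_le.mp (j_abs u₁ w.reverse)
  have b2 := abs_le.mp (j_abs w v₁)
  have b3 := abs_le.mp (j_abs u₁ v₁)
  rw [abs_le]
  constructor <;> linarith [b1.1, b1.2, b2.1, b2.2, b3.1, b3.2]

/-- Generators of `Red`. -/
def gen (i : Fin 3) : Red := ⟨[i], by simp [Reduced, List.Chain']⟩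

lemma f_gen (i : Fin 3) : f (gen i).1 = 0 := rfl

lemma f_conj_bound (g : Red) (i : Fin 3) : |f ((g * gen i * g⁻¹).1)| ≤ 6 := by
  have h1 : |f ((g * gen i).1) - f g.1 - f (gen i).1| ≤ 3 := f_F_bound g.2 (gen i).2
  have h2 : |f ((g * gen i * g⁻¹).1) - f ((g * gen i).1) - f ((g⁻¹ : Red).1)| ≤ 3 :=
    f_F_bound (g * gen i).2 (g⁻¹ : Red).2
  have h3 : f ((g⁻¹ : Red).1) = - f g.1 := by
    rw [inv_val, f_reverse]
  rw [f_gen] at h1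
  rw [h3] at h2
  rw [abs_le] at *
  constructor <;> linarith [h1.1, h1.2, h2.1, h2.2]

lemma f_prod_bound : ∀ L : List Red, (∀ x ∈ L, |f x.1| ≤ 6) →
    |f L.prod.1| ≤ 9 * L.length := by
  intro L
  induction L with
  | nil => intro _; simp [f]
  | cons x t ih =>
    intro h
    have hx := abs_le.mp (h x (by simp))
    have ht := abs_le.mp (ih (fun y hy => h y (by simp [hy])))
    have hq := abs_le.mp (f_F_bound (u := x.1) (v := t.prod.1) x.2 t.prod.2)
    rw [List.prod_cons]
    rw [abs_le]
    have hmv : (x * t.prod).1 = F t.prod.1 x.1 := rfl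
    rw [hmv, List.length_cons]
    push_cast
    constructor <;> linarith [hx.1, hx.2, ht.1, ht.2, hq.1, hq.2]

/-! ### The witness word `(abc)^M` -/

def powList : ℕ → List (Fin 3)
  | 0 => []
  | n + 1 => 0 :: 1 :: 2 :: powList n

lemma powList_reduced : ∀ n, Reduced (powList n) := by
  intro n
  induction n with
  | zero => simp [powList, Reduced, List.Chain']
  | succ n ih =>
    show List.IsChain _ (0 :: 1 :: 2 :: powList n)
    rw [List.isChain_cons_cons, List.isChain_cons_cons]
    refine ⟨by decide, by decide, ?_⟩
    cases n with
    | zero => simp [powList, Reduced]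
    | succ m =>
      rw [show powList (m + 1) = 0 :: 1 :: 2 :: powList m from rfl, List.isChain_cons_cons]
      exact ⟨by decide, ih⟩

def x012 : Red := ⟨[0, 1, 2],
  List.isChain_cons_cons.mpr ⟨by decide, List.isChain_cons_cons.mpr ⟨by decide, List.isChain_singleton _⟩⟩⟩

lemma x012_pow_val : ∀ M : ℕ, (x012 ^ M).1 = powList M := by
  intro M
  induction M with
  | zero => rfl
  | succ n ih =>
    rw [pow_succ', mul_val, ih]
    show F (powList n) [0, 1, 2] = powList (n + 1)
    have hcat : ([0, 1, 2] : List (Fin 3)) ++ powList n = powList (n + 1) := rfl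
    rw [← hcat]
    exact F_of_reduced_append [0, 1, 2] (powList n) (hcat ▸ powList_reduced (n + 1))

lemma f_powList : ∀ n : ℕ, f (powList (n + 1)) = 3 * n + 2 := by
  intro n
  induction n with
  | zero => decide
  | succ m ih =>
    have h2 : f (2 :: powList (m + 1)) = 1 + f (powList (m + 1)) := by
      rw [show powList (m + 1) = 0 :: 1 :: 2 :: powList m from rfl]
      rw [show f (2 :: 0 :: 1 :: 2 :: powList m)
            = ε 2 0 + f (0 :: 1 :: 2 :: powList m) from rfl]
      rw [show ε 2 0 = 1 from by decide]
    rw [show powList (m + 1 + 1) = 0 :: 1 :: 2 :: powList (m + 1) from rfl]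
    rw [show f (0 :: 1 :: 2 :: powList (m + 1))
          = ε 0 1 + (ε 1 2 + f (2 :: powList (m + 1))) from rfl]
    rw [h2, ih, show ε 0 1 = 1 from by decide, show ε 1 2 = 1 from by decide]
    push_cast
    ring

/-! ### The homomorphism from the presented group -/

lemma rels_hold : ∀ r ∈ triRels, (FreeGroup.lift (fun i => gen i)) r = 1 := by
  rintro r ⟨i, rfl⟩
  rw [map_mul, FreeGroup.lift_apply_of]
  apply Subtype.ext
  show F [i] [i] = []
  simp [F, push]

def φ : FreeCoxeter3 →* Red := PresentedGroup.toGroup rels_hold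

lemma φ_of (i : Fin 3) : φ (PresentedGroup.of i) = gen i := PresentedGroup.toGroup.of rels_hold

end RedModel

open RedModel in
theorem free_coxeter_reflection_length_unbounded :
    ∀ N : ℕ, ∃ w : FreeCoxeter3, (N : ℕ∞) < wordLength triR w := by
  intro N
  refine ⟨(PresentedGroup.of 0 * PresentedGroup.of 1 * PresentedGroup.of 2) ^ (4 * N + 4), ?_⟩
  have key : ∀ b ∈ {m : ℕ∞ | ∃ l : List FreeCoxeter3, (∀ r ∈ l, r ∈ triR) ∧
      l.prod = (PresentedGroup.of 0 * PresentedGroup.of 1 * PresentedGroup.of 2) ^ (4 * N + 4) ∧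
      (l.length : ℕ∞) = m}, (N : ℕ∞) + 1 ≤ b := by
    rintro b ⟨l, hmem, hprod, rfl⟩
    have hlen : N < l.length := by
      by_contra hle
      push_neg at hle
      have himg : (l.map φ).prod = x012 ^ (4 * N + 4) := by
        rw [← map_list_prod, hprod, map_pow, map_mul, map_mul, φ_of, φ_of, φ_of]
        congr 1
      have hbound : ∀ x ∈ l.map φ, |f x.1| ≤ 6 := by
        rintro x hx
        rw [List.mem_map] at hx
        obtain ⟨r, hr, rfl⟩ := hx
        obtain ⟨w, i, rfl⟩ := hmem r hr
        rw [map_mul, map_mul, map_inv, φ_of]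
        exact f_conj_bound (φ w) i
      have hfin := f_prod_bound (l.map φ) hbound
      rw [himg, x012_pow_val, List.length_map] at hfin
      rw [show 4 * N + 4 = (4 * N + 3) + 1 from rfl, f_powList] at hfin
      have habs : |(3 : ℤ) * (4 * (N : ℤ) + 3) + 2| = 3 * (4 * (N : ℤ) + 3) + 2 := by
        apply abs_of_nonneg
        positivity
      rw [show ((4 * N + 3 : ℕ) : ℤ) = 4 * (N : ℤ) + 3 by push_cast; ring] at hfin
      rw [habs] at hfin
      have hlN : (l.length : ℤ) ≤ N := by exact_mod_cast hle
      linarith [Int.ofNat_nonneg N]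
    calc (N : ℕ∞) + 1 = ((N + 1 : ℕ) : ℕ∞) := (Nat.cast_add_one N).symm
      _ ≤ (l.length : ℕ∞) := by exact_mod_cast hlen
  have h1 : (N : ℕ∞) < (N : ℕ∞) + 1 := by
    have : ((N : ℕ) : ℕ∞) < ((N + 1 : ℕ) : ℕ∞) := by exact_mod_cast Nat.lt_succ_self N
    simpa [Nat.cast_add] using this
  exact lt_of_lt_of_le h1 (le_sInf key)

end
end
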